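/- arXiv:1902.08982 — 8 statements merged into one kernel-verified Lean document; each statement's English description precedes it below -/
import Mathlib

section
/- For every natural number m, the product ∏_{k=0}^{m-1} (1 − x^{2^k}) in ℤ[x] has coefficient of x^r equal to (−1)^{s(r)} for every 0 ≤ r ≤ 2^m − 1, where s(r) is the number of 1 digits in the binary expansion of r, and coefficient 0 for r ≥ 2^m. -/
open Polynomial Finset

lemma digits_sum_add_pow (m : ℕ) : ∀ r < 2 ^ m,
    (Nat.digits 2 (r + 2 ^ m)).sum = (Nat.digits 2 r).sum + 1 := by
  induction m with
  | zero =>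
    intro r hr
    interval_cases r
    simp
  | succ m ih =>
    intro r hr
    have h2 : r + 2 ^ (m + 1) ≠ 0 := by positivity
    rw [Nat.digits_def' (by norm_num : 1 < 2) (Nat.pos_of_ne_zero h2)]
    have hdiv : (r + 2 ^ (m + 1)) / 2 = r / 2 + 2 ^ m := by
      rw [pow_succ]
      omega
    have hmod : (r + 2 ^ (m + 1)) % 2 = r % 2 := by
      rw [pow_succ]
      omega
    rw [List.sum_cons, hmod, hdiv, ih (r / 2) (by omega)]
    rcases Nat.eq_zero_or_pos r with h | h
    · subst h; simp
    · rw [Nat.digits_def' (by norm_num : 1 < 2) h, List.sum_cons]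
      ring

theorem coeff_prod_one_sub_X_pow_two_pow (m r : ℕ) :
    (∏ k ∈ Finset.range m, (1 - (X : ℤ[X]) ^ (2 ^ k))).coeff r =
      if r < 2 ^ m then (-1 : ℤ) ^ ((Nat.digits 2 r).sum) else 0 := by
  induction m generalizing r with
  | zero =>
    simp only [Finset.range_zero, Finset.prod_empty, Polynomial.coeff_one, pow_zero]
    rcases Nat.eq_zero_or_pos r with h | h
    · subst h; simp
    · rw [if_neg (by omega), if_neg (by omega)]
  | succ m ih =>
    rw [Finset.prod_range_succ, mul_sub, mul_one, coeff_sub, coeff_mul_X_pow', ih r]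
    by_cases h1 : r < 2 ^ m
    · rw [if_pos h1, if_neg (by omega), if_pos (by rw [pow_succ]; omega), sub_zero]
    · rw [if_neg h1, if_pos (by omega), ih (r - 2 ^ m)]
      by_cases h2 : r < 2 ^ (m + 1)
      · rw [if_pos (by rw [pow_succ] at h2; omega), if_pos h2]
        have := digits_sum_add_pow m (r - 2 ^ m) (by rw [pow_succ] at h2; omega)
        rw [Nat.sub_add_cancel (by omega)] at this
        rw [this, pow_succ]
        ring
      · rw [if_neg (by rw [pow_succ] at h2; omega), if_neg h2, zero_sub, neg_zero]
end

section
/- For d ≥ 1 define S_d = { m : 1 ≤ m ≤ d and ((d − m) mod 2^{⌊log₂ m⌋ + 1}) < 2^{⌊log₂ m⌋} }. Then |S_d| = ∑_{i=1}^{d} (s(i) − z(i)), where s(i) and z(i) are respectively the number of 1 digits and the number of 0 digits in the binary expansion of i. -/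
open Finset

/-!
Sort the elements `m` of `S_d` by `k = ⌊log₂ m⌋`. The defining condition says that bit `k` of
`d - m` is `0`, and as `m` runs through `[2^k, 2^(k+1)) ∩ [1, d]`, `n = d - m` runs through the
last `2^k` numbers below `M = d + 1 - 2^k` (fewer if `M < 2^k`). Adding `2^k` flips bit `k`, so the
zeros of bit `k` below `M - 2^k` are equinumerous with its ones below `M`; hence the `k`-th
contribution is (zeros − ones of bit `k` below `M`). Summing `s(i) - z(i)` digit position by digit
position gives, for position `k`, the signed count of bit `k` over `[2^k, d]`, which the shift by
`2^k` also turns into zeros − ones of bit `k` below `M`.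
-/

namespace Nat

theorem mod_two_pow_succ_lt_two_pow_iff {x k : ℕ} : x % 2 ^ (k + 1) < 2 ^ k ↔ ¬ x.testBit k := by
  have hlow := Nat.mod_lt x (Nat.two_pow_pos k)
  rw [testBit_eq_decide_div_mod_eq, pow_succ, Nat.mod_mul]
  rcases Nat.mod_two_eq_zero_or_one (x / 2 ^ k) with h | h <;> simp [h, hlow]

theorem sum_digits_two (n : ℕ) :
    (digits 2 n).sum = ∑ k ∈ range (digits 2 n).length, (n.testBit k).toNat := by
  rw [← Fin.sum_univ_getElem, ← Fin.sum_univ_eq_sum_range]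
  refine Fintype.sum_congr _ _ fun k => ?_
  rw [← List.getD_eq_getElem _ 0, getD_digits _ _ le_rfl, testBit_eq_decide_div_mod_eq]
  rcases Nat.mod_two_eq_zero_or_one (n / 2 ^ (k : ℕ)) with h | h <;> simp [h]

theorem sum_digits_two_sub_count_zero (n : ℕ) :
    ((digits 2 n).sum : ℤ) - ((digits 2 n).length - (digits 2 n).sum) =
      ∑ k ∈ range (digits 2 n).length, if n.testBit k then 1 else -1 := by
  have hsigned (b : Bool) : (if b then 1 else -1 : ℤ) = 2 * b.toNat - 1 := by cases b <;> rfl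
  simp only [hsigned, sum_sub_distrib, ← mul_sum, sum_digits_two, sum_const, card_range]
  push_cast
  ring

theorem card_filter_not_testBit_range_sub_two_pow (k M : ℕ) :
    #{n ∈ range (M - 2 ^ k) | ¬ n.testBit k} = #{n ∈ range M | n.testBit k} := by
  refine card_nbij' (· + 2 ^ k) (· - 2 ^ k) ?_ ?_ ?_ ?_
  · intro n hn
    simp only [coe_filter, mem_range, Set.mem_ofPred_eq] at hn ⊢
    rw [add_comm, testBit_two_pow_add_eq]
    exact ⟨by omega, by simpa using hn.2⟩
  · intro n hn
    simp only [coe_filter, mem_range, Set.mem_ofPred_eq] at hn ⊢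
    obtain ⟨j, rfl⟩ := exists_add_of_le (ge_two_pow_of_testBit hn.2)
    rw [testBit_two_pow_add_eq] at hn
    simp only [add_tsub_cancel_left]
    exact ⟨by omega, by simpa using hn.2⟩
  · intro n _
    simp
  · intro n hn
    simp only [coe_filter, mem_range, Set.mem_ofPred_eq] at hn
    have := ge_two_pow_of_testBit hn.2
    simp only
    omega

theorem card_filter_not_testBit_Ico_add_card_filter_testBit (k M : ℕ) :
    #{n ∈ Ico (M - 2 ^ k) M | ¬ n.testBit k} + #{n ∈ range M | n.testBit k} =
      #{n ∈ range M | ¬ n.testBit k} := by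
  rw [← card_filter_not_testBit_range_sub_two_pow, add_comm, card_filter, card_filter, card_filter,
    sum_range_add_sum_Ico _ (sub_le M _)]

theorem sum_Icc_two_pow_signed_testBit (k d : ℕ) :
    ∑ i ∈ Icc (2 ^ k) d, (if i.testBit k then 1 else -1 : ℤ) =
      (#{n ∈ range (d + 1 - 2 ^ k) | ¬ n.testBit k} : ℤ) -
        #{n ∈ range (d + 1 - 2 ^ k) | n.testBit k} := by
  rw [← Ico_add_one_right_eq_Icc, sum_Ico_eq_sum_range]
  simp [testBit_two_pow_add_eq, sum_ite, sub_eq_add_neg]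

theorem card_filter_log_eq_eq_card_filter_not_testBit_Ico (d k : ℕ) :
    #{m ∈ {m ∈ Icc 1 d | (d - m) % 2 ^ (log 2 m + 1) < 2 ^ log 2 m} | log 2 m = k} =
      #{n ∈ Ico (d + 1 - 2 ^ k - 2 ^ k) (d + 1 - 2 ^ k) | ¬ n.testBit k} := by
  have hpow : 2 ^ (k + 1) = 2 * 2 ^ k := by rw [pow_succ, mul_comm]
  have hlog {m : ℕ} (hm : m ≠ 0) : log 2 m = k ↔ 2 ^ k ≤ m ∧ m < 2 ^ (k + 1) :=
    log_eq_iff (Or.inr ⟨one_lt_two, hm⟩)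
  rw [filter_filter]
  refine card_nbij' (d - ·) (d - ·) ?_ ?_ ?_ ?_
  · intro m hm
    simp only [coe_filter, mem_Icc, mem_Ico, Set.mem_ofPred_eq] at hm ⊢
    obtain ⟨⟨hm1, hmd⟩, hcond, rfl⟩ := hm
    have := (hlog (by omega)).1 rfl
    exact ⟨by omega, mod_two_pow_succ_lt_two_pow_iff.1 hcond⟩
  · intro n hn
    simp only [coe_filter, mem_Icc, mem_Ico, Set.mem_ofPred_eq] at hn ⊢
    have hk : log 2 (d - n) = k := (hlog (by omega)).2 (by omega)
    rw [hk, Nat.sub_sub_self (by omega)]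
    exact ⟨by omega, mod_two_pow_succ_lt_two_pow_iff.2 hn.2, rfl⟩
  · intro m hm
    simp only [coe_filter, mem_Icc, Set.mem_ofPred_eq] at hm
    simp only
    omega
  · intro n hn
    simp only [coe_filter, mem_Ico, Set.mem_ofPred_eq] at hn
    simp only
    omega

end Nat

theorem card_Sd_eq_A268289_general (d : ℕ) :
    (((Finset.Icc 1 d).filter (fun m =>
        (d - m) % 2 ^ (Nat.log 2 m + 1) < 2 ^ (Nat.log 2 m))).card : ℤ) =
      ∑ i ∈ Finset.Icc 1 d,
        (((Nat.digits 2 i).sum : ℤ) -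
          (((Nat.digits 2 i).length : ℤ) - ((Nat.digits 2 i).sum : ℤ))) := by
  have hlog_mem : Set.MapsTo (Nat.log 2)
      ({m ∈ Icc 1 d | (d - m) % 2 ^ (Nat.log 2 m + 1) < 2 ^ Nat.log 2 m} : Finset ℕ)
      (range (d + 1)) := by
    intro m hm
    simp only [coe_filter, mem_Icc, Set.mem_ofPred_eq] at hm
    exact mem_range.2 ((Nat.log_le_self 2 m).trans_lt (by omega))
  have hswap (i k : ℕ) : i ∈ Icc 1 d ∧ k ∈ range (Nat.digits 2 i).length ↔
      i ∈ Icc (2 ^ k) d ∧ k ∈ range (d + 1) := by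
    simp only [mem_Icc, mem_range, Nat.lt_digits_length_iff one_lt_two]
    have := Nat.one_le_two_pow (n := k)
    have := Nat.lt_two_pow_self (n := k)
    omega
  rw [card_eq_sum_card_fiberwise hlog_mem, Nat.cast_sum,
    sum_congr rfl fun i _ => Nat.sum_digits_two_sub_count_zero i, sum_comm' hswap]
  refine sum_congr rfl fun k _ => ?_
  rw [Nat.card_filter_log_eq_eq_card_filter_not_testBit_Ico, Nat.sum_Icc_two_pow_signed_testBit,
    eq_sub_iff_add_eq]
  exact_mod_cast Nat.card_filter_not_testBit_Ico_add_card_filter_testBit k (d + 1 - 2 ^ k)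

theorem card_Sd_eq_A268289 (d : ℕ) (hd : 1 ≤ d) :
    (((Finset.Icc 1 d).filter (fun m =>
        (d - m) % 2 ^ (Nat.log 2 m + 1) < 2 ^ (Nat.log 2 m))).card : ℤ) =
      ∑ i ∈ Finset.Icc 1 d,
        (((Nat.digits 2 i).sum : ℤ) -
          (((Nat.digits 2 i).length : ℤ) - ((Nat.digits 2 i).sum : ℤ))) :=
  card_Sd_eq_A268289_general d
end

section
/- Define u_d = ∑_{i=1}^{d} (s(i) − z(i)) (with u_0 = 0), where s(i), z(i) count 1s and 0s in the binary expansion of i. Then for all s ≥ 0 and 0 ≤ n < 2^s (with n ≥ 1 in terms involving log₂), u_{n + 2^s} = u_n + (n+1)·(⌊log₂ n⌋ − s + 2) + 2^s − 2^{⌊log₂ n⌋ + 1}. -/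
open Finset

/-- OEIS A268289: cumulated excess of 1 digits over 0 digits in binary expansions. -/
def A268289 (d : ℕ) : ℤ :=
  ∑ i ∈ Finset.Icc 1 d,
    (((Nat.digits 2 i).sum : ℤ) -
      (((Nat.digits 2 i).length : ℤ) - ((Nat.digits 2 i).sum : ℤ)))

/-- The summand. -/
private def F (i : ℕ) : ℤ :=
  2 * ((Nat.digits 2 i).sum : ℤ) - ((Nat.digits 2 i).length : ℤ)

private lemma range_succ_eq_insert (d : ℕ) :
    Finset.range (d + 1) = insert 0 (Finset.Icc 1 d) := by
  ext x
  simp [Nat.lt_succ_iff]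
  omega

private lemma A268289_eq_range (d : ℕ) : A268289 d = ∑ i ∈ Finset.range (d + 1), F i := by
  rw [range_succ_eq_insert, Finset.sum_insert (by simp),
    show F 0 = 0 by simp [F], zero_add]
  unfold A268289
  exact Finset.sum_congr rfl fun i _ => by unfold F; ring

private lemma len_le {s j : ℕ} (h : j < 2 ^ s) : (Nat.digits 2 j).length ≤ s := by
  rcases Nat.eq_zero_or_pos j with rfl | hj
  · simp
  · rw [Nat.digits_len 2 j one_lt_two hj.ne']
    exact Nat.succ_le_of_lt (Nat.log_lt_of_lt_pow hj.ne' h)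

private lemma digits_shift {s j : ℕ} (h : j < 2 ^ s) :
    Nat.digits 2 (2 ^ s + j) =
      Nat.digits 2 j ++ List.replicate (s - (Nat.digits 2 j).length) 0 ++ [1] := by
  have hle := len_le h
  have h1 : Nat.digits 2 1 = [1] := by simp
  have key := Nat.digits_append_zeroes_append_digits (b := 2)
      (k := s - (Nat.digits 2 j).length) (m := 1) (n := j) one_lt_two one_pos
  rw [h1] at key
  rw [show (Nat.digits 2 j).length + (s - (Nat.digits 2 j).length) = s from by omega,
    mul_one, Nat.add_comm j] at key
  exact key.symm

private lemma sum_shift {s j : ℕ} (h : j < 2 ^ s) :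
    (Nat.digits 2 (2 ^ s + j)).sum = (Nat.digits 2 j).sum + 1 := by
  rw [digits_shift h]; simp

private lemma len_shift {s j : ℕ} (h : j < 2 ^ s) :
    (Nat.digits 2 (2 ^ s + j)).length = s + 1 := by
  have hle := len_le h
  rw [digits_shift h]
  simp only [List.length_append, List.length_replicate, List.length_singleton]
  omega

private lemma F_shift {s j : ℕ} (h : j < 2 ^ s) :
    F (2 ^ s + j) = 2 * ((Nat.digits 2 j).sum : ℤ) + 1 - s := by
  unfold F
  rw [sum_shift h, len_shift h]
  push_cast
  ring

/-- Sum of binary digit sums over a full power-of-two range. -/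
private lemma sum_digitsum (s : ℕ) :
    2 * ∑ j ∈ Finset.range (2 ^ s), ((Nat.digits 2 j).sum : ℤ) = s * 2 ^ s := by
  induction s with
  | zero => simp
  | succ s ih =>
    rw [pow_succ, mul_two, Finset.sum_range_add]
    have h2 : ∑ j ∈ Finset.range (2 ^ s), ((Nat.digits 2 (2 ^ s + j)).sum : ℤ)
        = ∑ j ∈ Finset.range (2 ^ s), (((Nat.digits 2 j).sum : ℤ) + 1) :=
      Finset.sum_congr rfl fun j hj => by
        rw [sum_shift (Finset.mem_range.mp hj)]; push_cast; ring
    rw [h2, Finset.sum_add_distrib, Finset.sum_const, Finset.card_range,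
      nsmul_eq_mul, mul_one]
    push_cast [-Nat.cast_list_sum]
    linear_combination 2 * ih

/-- `u_{2^s - 1} = 2^s - 1`, phrased as a range sum. -/
private lemma sum_F_pow (s : ℕ) :
    ∑ j ∈ Finset.range (2 ^ s), F j = 2 ^ s - 1 := by
  induction s with
  | zero => simp [F]
  | succ s ih =>
    rw [pow_succ, mul_two, Finset.sum_range_add, ih]
    have h2 : ∑ j ∈ Finset.range (2 ^ s), F (2 ^ s + j)
        = ∑ j ∈ Finset.range (2 ^ s), (2 * ((Nat.digits 2 j).sum : ℤ) + (1 - (s : ℤ))) :=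
      Finset.sum_congr rfl fun j hj => by
        rw [F_shift (Finset.mem_range.mp hj)]; ring
    rw [h2, Finset.sum_add_distrib, Finset.sum_const, Finset.card_range,
      nsmul_eq_mul, ← Finset.mul_sum]
    push_cast [-Nat.cast_list_sum]
    linear_combination sum_digitsum s

/-- Sum of floors of binary logs. -/
private lemma sum_log (n : ℕ) (hn : 1 ≤ n) :
    ∑ i ∈ Finset.Icc 1 n, ((Nat.log 2 i : ℤ))
      = (n + 1) * (Nat.log 2 n : ℤ) - 2 ^ (Nat.log 2 n + 1) + 2 := by
  induction n with
  | zero => omega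
  | succ n ih =>
    rcases Nat.eq_zero_or_pos n with rfl | hn'
    · simp
    rw [Finset.sum_Icc_succ_top (by omega), ih hn']
    have hL := Nat.pow_log_le_self 2 hn'.ne'
    have hL2 := Nat.lt_pow_succ_log_self one_lt_two n
    set L := Nat.log 2 n with hLdef
    rcases lt_or_eq_of_le (Nat.succ_le_of_lt hL2) with hlt | heq
    · have hll : Nat.log 2 (n + 1) = L :=
        Nat.log_eq_of_pow_le_of_lt_pow (le_trans hL (by omega)) hlt
      rw [hll]
      push_cast
      ring
    · have hn1 : n + 1 = 2 ^ (L + 1) := by omega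
      have hll : Nat.log 2 (n + 1) = L + 1 := by rw [hn1, Nat.log_pow one_lt_two]
      rw [hll]
      have hc : ((n : ℤ) + 1) = 2 ^ (L + 1) := by exact_mod_cast congrArg Nat.cast hn1
      push_cast
      linear_combination (-1 : ℤ) * hc

/-- Sum of digit lengths equals sum of logs plus `n`. -/
private lemma sum_len (n : ℕ) :
    ∑ j ∈ Finset.range (n + 1), ((Nat.digits 2 j).length : ℤ)
      = ∑ i ∈ Finset.Icc 1 n, ((Nat.log 2 i : ℤ)) + n := by
  rw [range_succ_eq_insert, Finset.sum_insert (by simp)]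
  simp only [Nat.digits_zero, List.length_nil, Nat.cast_zero, zero_add]
  have h2 : ∑ i ∈ Finset.Icc 1 n, ((Nat.digits 2 i).length : ℤ)
      = ∑ i ∈ Finset.Icc 1 n, (((Nat.log 2 i : ℤ)) + 1) :=
    Finset.sum_congr rfl fun i hi => by
      have hi1 : i ≠ 0 := by have := (Finset.mem_Icc.mp hi).1; omega
      rw [Nat.digits_len 2 i one_lt_two hi1]
      push_cast
      ring
  rw [h2, Finset.sum_add_distrib, Finset.sum_const, Nat.card_Icc, nsmul_eq_mul, mul_one]
  push_cast
  omega

theorem A268289_building_rule (s n : ℕ) (hn : 1 ≤ n) (hns : n < 2 ^ s) :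
    A268289 (n + 2 ^ s) =
      A268289 n + (n + 1) * ((Nat.log 2 n : ℤ) - s + 2) + 2 ^ s -
        2 ^ (Nat.log 2 n + 1) := by
  have key : A268289 (n + 2 ^ s)
      = (2 ^ s - 1) + ∑ j ∈ Finset.range (n + 1), F (2 ^ s + j) := by
    rw [A268289_eq_range, show n + 2 ^ s + 1 = 2 ^ s + (n + 1) by ring,
      Finset.sum_range_add, sum_F_pow]
  have hshift : ∑ j ∈ Finset.range (n + 1), F (2 ^ s + j)
      = 2 * (∑ j ∈ Finset.range (n + 1), ((Nat.digits 2 j).sum : ℤ))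
          + (1 - (s : ℤ)) * (n + 1) := by
    have h2 : ∑ j ∈ Finset.range (n + 1), F (2 ^ s + j)
        = ∑ j ∈ Finset.range (n + 1), (2 * ((Nat.digits 2 j).sum : ℤ) + (1 - (s : ℤ))) :=
      Finset.sum_congr rfl fun j hj => by
        have hj' : j < 2 ^ s := lt_of_lt_of_le (Finset.mem_range.mp hj) (by omega)
        rw [F_shift hj']; ring
    rw [h2, Finset.sum_add_distrib, Finset.sum_const, Finset.card_range,
      nsmul_eq_mul, ← Finset.mul_sum]
    push_cast
    ring
  have hAn : A268289 n
      = 2 * (∑ j ∈ Finset.range (n + 1), ((Nat.digits 2 j).sum : ℤ))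
          - (∑ i ∈ Finset.Icc 1 n, ((Nat.log 2 i : ℤ)) + n) := by
    rw [A268289_eq_range, ← sum_len, Finset.mul_sum, ← Finset.sum_sub_distrib]
    rfl
  rw [key, hshift, hAn, sum_log n hn]
  ring
end

section
/- For natural numbers k < 2^d and r, the coefficient of x^r in ∏_{0 ≤ j < d, bit j of k is 0} (1 + x^{2^j}) equals 1 if r AND k = 0 and r < 2^d, and 0 otherwise. -/
/-!
Expanding, `∏ j ∈ S, (1 + X ^ 2 ^ j) = ∑ T ⊆ S, X ^ (∑ j ∈ T, 2 ^ j)`. By uniqueness of binary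
expansions, the only `T` contributing to the coefficient of `X ^ r` is the set of bits of `r`,
and it contributes exactly when it lies in `S`. For `S = {j < d | bit j of k is 0}` this
condition reads `r < 2 ^ d` and `r &&& k = 0`.
-/

open Polynomial Finset

theorem Nat.lt_two_pow_iff_forall_testBit {r d : ℕ} : r < 2 ^ d ↔ ∀ j, r.testBit j → j < d := by
  refine ⟨fun h j hj => ?_, fun h => Nat.lt_pow_two_of_testBit r fun j hj => ?_⟩
  · by_contra! hdj
    simp [Nat.testBit_lt_two_pow (h.trans_le (Nat.pow_le_pow_right two_pos hdj))] at hj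
  · by_contra hrj
    exact (h j (by simpa using hrj)).not_ge hj

theorem Nat.and_eq_zero_iff_forall_testBit {r k : ℕ} :
    r &&& k = 0 ↔ ∀ j, r.testBit j → ¬ k.testBit j := by
  refine ⟨fun h j hr hk => ?_, fun h => Nat.eq_of_testBit_eq fun j => ?_⟩
  · simpa [hr, hk] using congrArg (Nat.testBit · j) h
  · by_cases hr : r.testBit j <;> simp [hr, h j]

open Classical in
theorem Polynomial.coeff_prod_one_add_X_pow_two_pow {R : Type*} [CommSemiring R]
    (S : Finset ℕ) (r : ℕ) :
    (∏ j ∈ S, (1 + X ^ 2 ^ j : R[X])).coeff r = if ∀ j, r.testBit j → j ∈ S then 1 else 0 := by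
  have sum_eq_iff (t : Finset ℕ) : r = ∑ j ∈ t, 2 ^ j ↔ equivBitIndices r = t :=
    equivBitIndices.eq_symm_apply
  simp_rw [prod_one_add, finsetSum_coeff, prod_pow_eq_pow_sum, coeff_X_pow, sum_eq_iff,
    sum_ite_eq, mem_powerset, subset_iff, equivBitIndices_apply, List.mem_toFinset,
    Nat.mem_bitIndices]

theorem coeff_mask_factor_general (d k r : ℕ) :
    (∏ j ∈ (Finset.range d).filter (fun j => ¬ k.testBit j),
        (1 + (X : ℤ[X]) ^ (2 ^ j))).coeff r =
      if r &&& k = 0 ∧ r < 2 ^ d then 1 else 0 := by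
  classical
  rw [coeff_prod_one_add_X_pow_two_pow]
  refine if_congr ?_ rfl rfl
  rw [Nat.and_eq_zero_iff_forall_testBit, Nat.lt_two_pow_iff_forall_testBit, ← forall_and]
  exact forall_congr' fun j => by rw [mem_filter, mem_range, imp_and, and_comm]

theorem coeff_mask_factor (d k r : ℕ) (hk : k < 2 ^ d) :
    (∏ j ∈ (Finset.range d).filter (fun j => ¬ k.testBit j),
        (1 + (X : ℤ[X]) ^ (2 ^ j))).coeff r =
      if r &&& k = 0 ∧ r < 2 ^ d then 1 else 0 :=
  coeff_mask_factor_general d k r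
end

section
/- Let n = 2^d and let A, B be polynomials over a commutative ring of degree < n. For 0 ≤ k < n, write k in binary as (…d₂d₁d₀)₂ and set ḟ_k = ∏_{j<d} (1 − x^{2^j})^{d_j}, f̄_k = ∏_{j<d} (1 + x^{2^j})^{1−d_j}, and σ_k = (−1)^{s(k)} where s(k) is the binary weight of k. Then A·B = ∑_{k=0}^{n−1} f̄_k · ( σ_k · f̄_k · x^k ⊙ ḟ_k·A ⊙ ḟ_k·B ), where ⊙ denotes the termwise (Hadamard) product of polynomials. -/
/-!
Induction on `d`, with `m = 2 ^ d`. Splitting `A = A₀ + X ^ m * A₁` and `B = B₀ + X ^ m * B₁`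
into halves of degree `< m`, Karatsuba's identity
`A * B = (1 + X ^ m) * (A₀ * B₀ + X ^ m * A₁ * B₁) - X ^ m * (A₁ - A₀) * (B₁ - B₀)`
reduces the product to three half-size ones. At level `d + 1` the indices `k` and `m + k`
(for `k < m`) both correspond to index `k` at level `d`: the masks `σ_k f̄_k X ^ k` satisfy
`mask (d + 1) k = (1 + X ^ m) * mask d k` and `mask (d + 1) (m + k) = -(X ^ m * mask d k)`,
while `ḟ_k` gains the factor `1 - X ^ m` exactly for `m + k`. Since `mask d k` is supported in
degrees `[k, m)` and `ḟ_k * A₀` has degree `< m + k`, in each Hadamard product every shifted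
copy of the mask meets exactly one shifted piece of `ḟ_k * A`.
-/

open Polynomial Finset

/-- Termwise (Hadamard) product of polynomials: the `r`-th coefficient of
`hadamard P Q` is `P.coeff r * Q.coeff r`. -/
noncomputable def hadamard {R : Type*} [CommRing R] (P Q : R[X]) : R[X] :=
  ∑ r ∈ P.support, Polynomial.C (P.coeff r * Q.coeff r) * X ^ r

section Hadamard

variable {R : Type*} [CommRing R]

@[simp]
theorem coeff_hadamard (P Q : R[X]) (r : ℕ) :
    (hadamard P Q).coeff r = P.coeff r * Q.coeff r := by
  rw [hadamard, finsetSum_coeff]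
  simp only [coeff_C_mul_X_pow, sum_ite_eq]
  split_ifs with h
  · rfl
  · rw [notMem_support_iff.mp h, zero_mul]

theorem hadamard_comm (P Q : R[X]) : hadamard P Q = hadamard Q P := by
  ext r; simp [mul_comm]

theorem hadamard_add_left (P P' Q : R[X]) :
    hadamard (P + P') Q = hadamard P Q + hadamard P' Q := by
  ext r; simp [add_mul]

theorem hadamard_add_right (P Q Q' : R[X]) :
    hadamard P (Q + Q') = hadamard P Q + hadamard P Q' := by
  ext r; simp [mul_add]

theorem hadamard_neg_left (P Q : R[X]) : hadamard (-P) Q = -hadamard P Q := by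
  ext r; simp

theorem hadamard_C (a : R) (P : R[X]) : hadamard (C a) P = C (a * P.coeff 0) := by
  ext r; rcases eq_or_ne r 0 with rfl | hr <;> simp [coeff_C, *]

theorem hadamard_X_pow_mul_X_pow_mul (m : ℕ) (P Q : R[X]) :
    hadamard (X ^ m * P) (X ^ m * Q) = X ^ m * hadamard P Q := by
  ext r; simp only [coeff_hadamard, coeff_X_pow_mul']; split_ifs <;> simp

theorem hadamard_X_pow_mul_eq_zero {P : R[X]} {n : ℕ} (hP : P.natDegree < n) (Q : R[X]) :
    hadamard P (X ^ n * Q) = 0 := by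
  ext r
  simp only [coeff_hadamard, coeff_X_pow_mul', coeff_zero]
  split_ifs with h
  · rw [coeff_eq_zero_of_natDegree_lt (hP.trans_le h), zero_mul]
  · rw [mul_zero]

theorem natDegree_hadamard_le (P Q : R[X]) : (hadamard P Q).natDegree ≤ P.natDegree :=
  natDegree_le_iff_coeff_eq_zero.mpr fun r hr => by
    simp [coeff_eq_zero_of_natDegree_lt hr]

theorem X_pow_dvd_hadamard {P : R[X]} {k : ℕ} (hP : X ^ k ∣ P) (Q : R[X]) :
    X ^ k ∣ hadamard P Q := by
  rw [X_pow_dvd_iff] at hP ⊢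
  intro r hr
  simp [hP r hr]

theorem hadamard_add_X_pow_mul_of_natDegree_lt {M : R[X]} {m : ℕ} (hM : M.natDegree < m)
    (P₀ P₁ : R[X]) : hadamard M (P₀ + X ^ m * P₁) = hadamard M P₀ := by
  rw [hadamard_add_right, hadamard_X_pow_mul_eq_zero hM, add_zero]

theorem hadamard_X_pow_mul_add_X_pow_mul {M P₀ : R[X]} {k m : ℕ} (hM : X ^ k ∣ M)
    (hP₀ : P₀.natDegree < m + k) (P₁ : R[X]) :
    hadamard (X ^ m * M) (P₀ + X ^ m * P₁) = X ^ m * hadamard M P₁ := by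
  obtain ⟨N, rfl⟩ := hM
  have hlow : hadamard (X ^ m * (X ^ k * N)) P₀ = 0 := by
    rw [hadamard_comm, ← mul_assoc, ← pow_add, hadamard_X_pow_mul_eq_zero hP₀]
  rw [hadamard_add_right, hlow, hadamard_X_pow_mul_X_pow_mul, zero_add]

theorem hadamard_add_X_pow_mul {M₀ M₁ P₀ : R[X]} {k m : ℕ} (hM₀ : M₀.natDegree < m)
    (hM₁ : X ^ k ∣ M₁) (hP₀ : P₀.natDegree < m + k) (P₁ : R[X]) :
    hadamard (M₀ + X ^ m * M₁) (P₀ + X ^ m * P₁) = hadamard M₀ P₀ + X ^ m * hadamard M₁ P₁ := by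
  rw [hadamard_add_left, hadamard_add_X_pow_mul_of_natDegree_lt hM₀,
    hadamard_X_pow_mul_add_X_pow_mul hM₁ hP₀]

end Hadamard

theorem Nat.sum_digits_two_two_pow_add {d k : ℕ} (hk : k < 2 ^ d) :
    (Nat.digits 2 (2 ^ d + k)).sum = (Nat.digits 2 k).sum + 1 := by
  have hlen : (Nat.digits 2 k).length ≤ d := (Nat.digits_length_le_iff one_lt_two k).mpr hk
  have happend := Nat.digits_append_zeroes_append_digits (b := 2) (k := d - (Nat.digits 2 k).length)
    (n := k) one_lt_two one_pos
  rw [Nat.add_sub_cancel' hlen, mul_one] at happend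
  rw [add_comm, ← happend]
  simp

theorem Polynomial.exists_eq_add_X_pow_mul {R : Type*} [Ring R] {A : R[X]} {m : ℕ}
    (hm : 0 < m) (hA : A.natDegree < m + m) :
    ∃ A₀ A₁ : R[X], A₀.natDegree < m ∧ A₁.natDegree < m ∧ A = A₀ + X ^ m * A₁ := by
  rcases subsingleton_or_nontrivial R with hR | hR
  · exact ⟨0, 0, by simpa, by simpa, Subsingleton.elim _ _⟩
  refine ⟨A %ₘ X ^ m, A /ₘ X ^ m, ?_, ?_, (modByMonic_add_div A (X ^ m)).symm⟩
  · have hXm : (X : R[X]) ^ m ≠ 1 := fun h => by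
      simpa [hm.ne'] using congrArg natDegree h
    simpa using natDegree_modByMonic_lt A (monic_X_pow m) hXm
  · rw [natDegree_divByMonic A (monic_X_pow m), natDegree_X_pow]
    omega

namespace Karatsuba

variable (R : Type*) [CommRing R]

noncomputable def fbar (d k : ℕ) : R[X] :=
  ∏ j ∈ range d, (1 + (X : R[X]) ^ (2 ^ j)) ^ (if k.testBit j then 0 else 1)

noncomputable def fdot (d k : ℕ) : R[X] :=
  ∏ j ∈ range d, (1 - (X : R[X]) ^ (2 ^ j)) ^ (if k.testBit j then 1 else 0)

noncomputable def mask (d k : ℕ) : R[X] :=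
  (-1) ^ (Nat.digits 2 k).sum * fbar R d k * X ^ k

variable {R}

noncomputable def leafProduct (d k : ℕ) (A B : R[X]) : R[X] :=
  hadamard (hadamard (mask R d k) (fdot R d k * A)) (fdot R d k * B)

variable {d k : ℕ}

theorem fbar_succ_of_lt (hk : k < 2 ^ d) : fbar R (d + 1) k = fbar R d k * (1 + X ^ 2 ^ d) := by
  simp [fbar, prod_range_succ, Nat.testBit_lt_two_pow hk]

theorem fdot_succ_of_lt (hk : k < 2 ^ d) : fdot R (d + 1) k = fdot R d k := by
  simp [fdot, prod_range_succ, Nat.testBit_lt_two_pow hk]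

theorem fbar_succ_two_pow_add (hk : k < 2 ^ d) : fbar R (d + 1) (2 ^ d + k) = fbar R d k := by
  simp only [fbar, prod_range_succ, Nat.testBit_two_pow_add_eq, Nat.testBit_lt_two_pow hk]
  simp only [Bool.not_false, if_true, pow_zero, mul_one]
  exact prod_congr rfl fun j hj => by rw [Nat.testBit_two_pow_add_gt (mem_range.mp hj)]

theorem fdot_succ_two_pow_add (hk : k < 2 ^ d) :
    fdot R (d + 1) (2 ^ d + k) = fdot R d k * (1 - X ^ 2 ^ d) := by
  simp only [fdot, prod_range_succ, Nat.testBit_two_pow_add_eq, Nat.testBit_lt_two_pow hk]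
  simp only [Bool.not_false, if_true, pow_one]
  congr 1
  exact prod_congr rfl fun j hj => by rw [Nat.testBit_two_pow_add_gt (mem_range.mp hj)]

theorem mask_succ_of_lt (hk : k < 2 ^ d) :
    mask R (d + 1) k = mask R d k + X ^ 2 ^ d * mask R d k := by
  rw [mask, mask, fbar_succ_of_lt hk]
  ring

theorem mask_succ_two_pow_add (hk : k < 2 ^ d) :
    mask R (d + 1) (2 ^ d + k) = -(X ^ 2 ^ d * mask R d k) := by
  rw [mask, mask, fbar_succ_two_pow_add hk, Nat.sum_digits_two_two_pow_add hk]
  ring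

theorem X_pow_dvd_mask : X ^ k ∣ mask R d k := dvd_mul_left _ _

theorem natDegree_mask_lt (hk : k < 2 ^ d) : (mask R d k).natDegree < 2 ^ d := by
  induction d generalizing k with
  | zero => simp_all [mask, fbar]
  | succ d ih =>
    have hX : ∀ M : R[X], M.natDegree < 2 ^ d → (X ^ 2 ^ d * M).natDegree < 2 ^ (d + 1) :=
      fun M hM => natDegree_mul_le.trans_lt
        (by have := natDegree_X_pow_le (R := R) (2 ^ d); rw [pow_succ]; omega)
    rcases lt_or_ge k (2 ^ d) with hlt | hge
    · rw [mask_succ_of_lt hlt]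
      exact (natDegree_add_le _ _).trans_lt
        (max_lt ((ih hlt).trans (by omega)) (hX _ (ih hlt)))
    · obtain ⟨k, rfl⟩ := Nat.exists_eq_add_of_le hge
      have hk' : k < 2 ^ d := by omega
      rw [mask_succ_two_pow_add hk', natDegree_neg]
      exact hX _ (ih hk')

theorem natDegree_fdot_le (hk : k < 2 ^ d) : (fdot R d k).natDegree ≤ k := by
  induction d generalizing k with
  | zero => simp [fdot]
  | succ d ih =>
    rcases lt_or_ge k (2 ^ d) with hlt | hge
    · rw [fdot_succ_of_lt hlt]
      exact ih hlt
    · obtain ⟨k, rfl⟩ := Nat.exists_eq_add_of_le hge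
      have hk' : k < 2 ^ d := by omega
      have hsub : (1 - X ^ 2 ^ d : R[X]).natDegree ≤ 2 ^ d :=
        (natDegree_sub_le _ _).trans (by simp [natDegree_X_pow_le])
      rw [fdot_succ_two_pow_add hk']
      exact natDegree_mul_le.trans (by have := ih hk'; omega)

theorem natDegree_fdot_mul_lt (hk : k < 2 ^ d) {A : R[X]} (hA : A.natDegree < 2 ^ d) :
    (fdot R d k * A).natDegree < 2 ^ d + k :=
  natDegree_mul_le.trans_lt (by have := natDegree_fdot_le (R := R) hk; omega)

theorem leafProduct_succ_of_lt (hk : k < 2 ^ d) {A₀ B₀ : R[X]} (hA₀ : A₀.natDegree < 2 ^ d)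
    (hB₀ : B₀.natDegree < 2 ^ d) (A₁ B₁ : R[X]) :
    leafProduct (d + 1) k (A₀ + X ^ 2 ^ d * A₁) (B₀ + X ^ 2 ^ d * B₁) =
      leafProduct d k A₀ B₀ + X ^ 2 ^ d * leafProduct d k A₁ B₁ := by
  simp only [leafProduct, mask_succ_of_lt hk, fdot_succ_of_lt hk, mul_add,
    mul_left_comm (fdot R d k) (X ^ 2 ^ d)]
  rw [hadamard_add_X_pow_mul (natDegree_mask_lt hk) X_pow_dvd_mask
      (natDegree_fdot_mul_lt hk hA₀),
    hadamard_add_X_pow_mul ((natDegree_hadamard_le _ _).trans_lt (natDegree_mask_lt hk))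
      (X_pow_dvd_hadamard X_pow_dvd_mask _) (natDegree_fdot_mul_lt hk hB₀)]

theorem leafProduct_succ_two_pow_add (hk : k < 2 ^ d) {A₀ B₀ : R[X]}
    (hA₀ : A₀.natDegree < 2 ^ d) (hB₀ : B₀.natDegree < 2 ^ d) (A₁ B₁ : R[X]) :
    leafProduct (d + 1) (2 ^ d + k) (A₀ + X ^ 2 ^ d * A₁) (B₀ + X ^ 2 ^ d * B₁) =
      -(X ^ 2 ^ d * leafProduct d k (A₁ - A₀) (B₁ - B₀)) := by
  have hexpand : ∀ P₀ P₁ : R[X], fdot R d k * (1 - X ^ 2 ^ d) * (P₀ + X ^ 2 ^ d * P₁) =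
      fdot R d k * P₀ + X ^ 2 ^ d * (fdot R d k * (P₁ - P₀) + X ^ 2 ^ d * -(fdot R d k * P₁)) :=
    fun _ _ => by ring
  simp only [leafProduct, mask_succ_two_pow_add hk, fdot_succ_two_pow_add hk, hexpand,
    hadamard_neg_left]
  rw [hadamard_X_pow_mul_add_X_pow_mul X_pow_dvd_mask (natDegree_fdot_mul_lt hk hA₀),
    hadamard_add_X_pow_mul_of_natDegree_lt (natDegree_mask_lt hk),
    hadamard_X_pow_mul_add_X_pow_mul (X_pow_dvd_hadamard X_pow_dvd_mask _)
      (natDegree_fdot_mul_lt hk hB₀),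
    hadamard_add_X_pow_mul_of_natDegree_lt
      ((natDegree_hadamard_le _ _).trans_lt (natDegree_mask_lt hk))]

theorem sum_fbar_mul_leafProduct {A B : R[X]} (hA : A.natDegree < 2 ^ d)
    (hB : B.natDegree < 2 ^ d) :
    ∑ k ∈ range (2 ^ d), fbar R d k * leafProduct d k A B = A * B := by
  induction d generalizing A B with
  | zero =>
    rw [pow_zero, Nat.lt_one_iff] at hA hB
    rw [eq_C_of_natDegree_eq_zero hA, eq_C_of_natDegree_eq_zero hB]
    simp only [sum_range_one, leafProduct, mask, fbar, fdot, range_zero, prod_empty,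
      Nat.digits_zero, List.sum_nil, pow_zero, one_mul, mul_one]
    rw [← C_1, hadamard_C, hadamard_C, coeff_C_zero, coeff_C_zero, one_mul, C_mul]
  | succ d ih =>
    have hm : 2 ^ (d + 1) = 2 ^ d + 2 ^ d := by rw [pow_succ, mul_two]
    obtain ⟨A₀, A₁, hA₀, hA₁, rfl⟩ := exists_eq_add_X_pow_mul (Nat.two_pow_pos d) (hm ▸ hA)
    obtain ⟨B₀, B₁, hB₀, hB₁, rfl⟩ := exists_eq_add_X_pow_mul (Nat.two_pow_pos d) (hm ▸ hB)
    have hAdiff : (A₁ - A₀).natDegree < 2 ^ d := (natDegree_sub_le _ _).trans_lt (max_lt hA₁ hA₀)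
    have hBdiff : (B₁ - B₀).natDegree < 2 ^ d := (natDegree_sub_le _ _).trans_lt (max_lt hB₁ hB₀)
    have hlow : ∀ k ∈ range (2 ^ d), fbar R (d + 1) k * leafProduct (d + 1) k
        (A₀ + X ^ 2 ^ d * A₁) (B₀ + X ^ 2 ^ d * B₁) =
        (1 + X ^ 2 ^ d) * (fbar R d k * leafProduct d k A₀ B₀) +
          (1 + X ^ 2 ^ d) * X ^ 2 ^ d * (fbar R d k * leafProduct d k A₁ B₁) := fun k hk => by
      rw [fbar_succ_of_lt (mem_range.mp hk), leafProduct_succ_of_lt (mem_range.mp hk) hA₀ hB₀]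
      ring
    have hhigh : ∀ k ∈ range (2 ^ d), fbar R (d + 1) (2 ^ d + k) * leafProduct (d + 1) (2 ^ d + k)
        (A₀ + X ^ 2 ^ d * A₁) (B₀ + X ^ 2 ^ d * B₁) =
        -(X ^ 2 ^ d * (fbar R d k * leafProduct d k (A₁ - A₀) (B₁ - B₀))) := fun k hk => by
      rw [fbar_succ_two_pow_add (mem_range.mp hk),
        leafProduct_succ_two_pow_add (mem_range.mp hk) hA₀ hB₀]
      ring
    rw [hm, sum_range_add, sum_congr rfl hlow, sum_congr rfl hhigh, sum_add_distrib,
      sum_neg_distrib, ← mul_sum, ← mul_sum, ← mul_sum, ih hA₀ hB₀, ih hA₁ hB₁, ih hAdiff hBdiff]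
    ring

end Karatsuba

theorem flattened_karatsuba {R : Type*} [CommRing R] (d : ℕ) (A B : R[X])
    (hA : A.natDegree < 2 ^ d) (hB : B.natDegree < 2 ^ d) :
    A * B =
      ∑ k ∈ Finset.range (2 ^ d),
        (∏ j ∈ Finset.range d,
            (1 + (X : R[X]) ^ (2 ^ j)) ^ (if k.testBit j then 0 else 1)) *
          hadamard
            (hadamard
              ((-1 : R[X]) ^ ((Nat.digits 2 k).sum) *
                (∏ j ∈ Finset.range d,
                  (1 + (X : R[X]) ^ (2 ^ j)) ^ (if k.testBit j then 0 else 1)) *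
                X ^ k)
              ((∏ j ∈ Finset.range d,
                  (1 - (X : R[X]) ^ (2 ^ j)) ^ (if k.testBit j then 1 else 0)) * A))
            ((∏ j ∈ Finset.range d,
                (1 - (X : R[X]) ^ (2 ^ j)) ^ (if k.testBit j then 1 else 0)) * B) :=
  (Karatsuba.sum_fbar_mul_leafProduct hA hB).symm
end

section
/- Let a(x) = ∑ a_t x^t and b(x) = ∑ b_t x^t be formal power series over a commutative ring. With σ_k = (−1)^{s(k)}, T(n,k) = [k AND (n−k) = 0], the coefficient of x^m in a(x)·b(x) equals ∑_{k=0}^{m} σ_k ∑_{j=k}^{m} T(k+m−j, k)·T(j, k)·( ∑_{t=j−k}^{j} T(k, j−t)·σ_t·a_t )·( ∑_{t=j−k}^{j} T(k, j−t)·σ_t·b_t ). -/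
/-!
Both sides are bilinear in the coefficients, so it suffices that the coefficient of `a_p b_q` on the
right is `[p + q = m]`. Read through binary expansions, `T(n, k) = 1` for `k ≤ n` exactly when the
bits of `k` are among those of `n`, and `σ_n = (-1)^(number of bits of n)`. For fixed `j` the sum
over `k` becomes an alternating sum over an interval of the Boolean lattice; it vanishes unless
`p, q ⊆ j` and `j ∩ (m - j) = p ∩ q`. The remaining sum over these `j` is again an alternating
interval sum, which survives only when `(p ∪ q) + (p ∩ q) = m`, i.e. `p + q = m`, and there the
signs cancel.
-/

open Finset

namespace SierpinskiConvolution

def bitSet (n : ℕ) : Finset ℕ := n.bitIndices.toFinset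

@[simp] lemma mem_bitSet {n i : ℕ} : i ∈ bitSet n ↔ n.testBit i := by
  simp [bitSet]

lemma sum_two_pow_bitSet (n : ℕ) : ∑ i ∈ bitSet n, 2 ^ i = n :=
  sum_toFinset_bitIndices_two_pow n

lemma bitSet_sum_two_pow (s : Finset ℕ) : bitSet (∑ i ∈ s, 2 ^ i) = s :=
  toFinset_bitIndices_sum_two_pow s

lemma bitSet_injective : Function.Injective bitSet :=
  equivBitIndices.injective

@[simp] lemma bitSet_land (a b : ℕ) : bitSet (a &&& b) = bitSet a ∩ bitSet b := by
  ext; simp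

@[simp] lemma bitSet_lor (a b : ℕ) : bitSet (a ||| b) = bitSet a ∪ bitSet b := by
  ext; simp

lemma land_eq_zero_iff_disjoint {a b : ℕ} : a &&& b = 0 ↔ Disjoint (bitSet a) (bitSet b) := by
  rw [← bitSet_injective.eq_iff, bitSet_land, disjoint_iff_inter_eq_empty]
  simp [bitSet]

lemma le_of_bitSet_subset {a b : ℕ} (h : bitSet a ⊆ bitSet b) : a ≤ b := by
  rw [← sum_two_pow_bitSet a, ← sum_two_pow_bitSet b]
  exact sum_le_sum_of_subset h

lemma bitSet_add {a b : ℕ} (h : Disjoint (bitSet a) (bitSet b)) :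
    bitSet (a + b) = bitSet a ∪ bitSet b := by
  rw [← bitSet_sum_two_pow (bitSet a ∪ bitSet b), sum_union h,
    sum_two_pow_bitSet, sum_two_pow_bitSet]

lemma bitSet_sub {a b : ℕ} (h : bitSet b ⊆ bitSet a) :
    bitSet (a - b) = bitSet a \ bitSet b := by
  set c := ∑ i ∈ bitSet a \ bitSet b, 2 ^ i
  have hc : bitSet c = bitSet a \ bitSet b := bitSet_sum_two_pow _
  have hbc : b + c = a := bitSet_injective <| by
    rw [bitSet_add (hc ▸ disjoint_sdiff), hc, union_sdiff_of_subset h]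
  rw [show a - b = c by omega, hc]

lemma add_eq_lor_add_land (p q : ℕ) : p + q = (p ||| q) + (p &&& q) := by
  conv_lhs => rw [← sum_two_pow_bitSet p, ← sum_two_pow_bitSet q]
  rw [← sum_union_inter, ← bitSet_lor, ← bitSet_land, sum_two_pow_bitSet,
    sum_two_pow_bitSet]

lemma land_sub_eq_zero_iff_bitSet_subset {k n : ℕ} (h : k ≤ n) :
    k &&& (n - k) = 0 ↔ bitSet k ⊆ bitSet n := by
  rw [land_eq_zero_iff_disjoint]
  constructor
  · intro hd
    rw [← Nat.add_sub_of_le h, bitSet_add hd]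
    exact subset_union_left
  · intro hs
    rw [bitSet_sub hs]
    exact disjoint_sdiff

lemma digits_two_sum_eq_length_bitIndices (n : ℕ) :
    (Nat.digits 2 n).sum = n.bitIndices.length := by
  induction n using Nat.strong_induction_on with
  | _ n ih =>
  rcases Nat.eq_zero_or_pos n with rfl | hn
  · simp
  rw [Nat.digits_def' (by norm_num) hn, List.sum_cons, ih _ (Nat.div_lt_self hn one_lt_two)]
  rcases Nat.mod_two_eq_zero_or_one n with h | h
  · conv_rhs => rw [← Nat.div_add_mod n 2, h, add_zero, Nat.bitIndices_two_mul]
    simp [h]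
  · conv_rhs => rw [← Nat.div_add_mod n 2, h, Nat.bitIndices_two_mul_add_one]
    simp [h, add_comm]

lemma digits_two_sum_eq_card_bitSet (n : ℕ) : (Nat.digits 2 n).sum = #(bitSet n) := by
  rw [digits_two_sum_eq_length_bitIndices, bitSet,
    List.toFinset_card_of_nodup Nat.bitIndices_nodup]

lemma le_and_bitSet_sub_subset_iff {p j : ℕ} {K : Finset ℕ} (hK : K ⊆ bitSet j) :
    (p ≤ j ∧ bitSet (j - p) ⊆ K) ↔ (bitSet p ⊆ bitSet j ∧ bitSet j \ bitSet p ⊆ K) := by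
  constructor
  · rintro ⟨hpj, h⟩
    have hP : bitSet p = bitSet j \ bitSet (j - p) := by
      rw [← bitSet_sub (h.trans hK), Nat.sub_sub_self hpj]
    rw [hP, Finset.sdiff_sdiff_eq_self (h.trans hK)]
    exact ⟨sdiff_subset, h⟩
  · rintro ⟨hP, h⟩
    exact ⟨le_of_bitSet_subset hP, bitSet_sub hP ▸ h⟩

lemma bitSet_sub_two_mul_of_inter_eq {j m d : ℕ} (hj : j ≤ m)
    (h : bitSet j ∩ bitSet (m - j) = bitSet d) :
    2 * d ≤ m ∧ bitSet (m - 2 * d) = bitSet (j - d) ∪ bitSet (m - j - d) := by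
  have hdj : bitSet d ⊆ bitSet j := h ▸ inter_subset_left
  have hdc : bitSet d ⊆ bitSet (m - j) := h ▸ inter_subset_right
  have hdisj : Disjoint (bitSet (j - d)) (bitSet (m - j - d)) := by
    rw [bitSet_sub hdj, bitSet_sub hdc, disjoint_left]
    intro i hi hi'
    rw [mem_sdiff] at hi hi'
    exact hi.2 (h ▸ mem_inter.mpr ⟨hi.1, hi'.1⟩)
  have := le_of_bitSet_subset hdj
  have := le_of_bitSet_subset hdc
  exact ⟨by omega, by rw [← bitSet_add hdisj]; congr 1; omega⟩

lemma bitSet_add_inter_bitSet_sub_eq {x d m : ℕ} (hd : 2 * d ≤ m)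
    (hE : Disjoint (bitSet (m - 2 * d)) (bitSet d)) (hx : bitSet x ⊆ bitSet (m - 2 * d)) :
    bitSet (x + d) ∩ bitSet (m - (x + d)) = bitSet d := by
  have hxe := le_of_bitSet_subset hx
  rw [bitSet_add (disjoint_of_subset_left hx hE), show m - (x + d) = m - 2 * d - x + d by omega,
    bitSet_add (bitSet_sub hx ▸ disjoint_of_subset_left sdiff_subset hE), bitSet_sub hx]
  ext i
  simp only [mem_inter, mem_union, mem_sdiff]
  tauto

/-- `T(n, k)`; junk value `1` when `k > n`, where the truncated `n - k` is `0`. -/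
def sierpinski (R : Type*) [Zero R] [One R] (n k : ℕ) : R := if k &&& (n - k) = 0 then 1 else 0

def thueMorseSign (R : Type*) [Monoid R] [Neg R] (n : ℕ) : R := (-1) ^ (Nat.digits 2 n).sum

lemma thueMorseSign_eq {R : Type*} [Monoid R] [Neg R] (n : ℕ) :
    thueMorseSign R n = (-1) ^ #(bitSet n) := by
  rw [thueMorseSign, digits_two_sum_eq_card_bitSet]

section ZeroOne

variable {R : Type*} [Zero R] [One R]

lemma sierpinski_eq_ite_disjoint (n k : ℕ) :
    sierpinski R n k = if Disjoint (bitSet k) (bitSet (n - k)) then 1 else 0 := by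
  simp only [sierpinski, land_eq_zero_iff_disjoint]

lemma sierpinski_eq_ite_subset {n k : ℕ} (h : k ≤ n) :
    sierpinski R n k = if bitSet k ⊆ bitSet n then 1 else 0 := by
  simp only [sierpinski, land_sub_eq_zero_iff_bitSet_subset h]

end ZeroOne

section Ring

variable {R : Type*} [Ring R]

lemma sum_Icc_neg_one_pow_card {α : Type*} [DecidableEq α] (A B : Finset α) :
    ∑ K ∈ Icc A B, (-1 : R) ^ #K = if A = B then (-1) ^ #A else 0 := by
  by_cases hAB : A ⊆ B
  · have hdisj : ∀ S ∈ (B \ A).powerset, Disjoint A S := fun S hS =>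
      disjoint_of_subset_right (mem_powerset.mp hS) disjoint_sdiff
    have hinj : Set.InjOn (A ∪ ·) (B \ A).powerset := fun S hS T hT hST => by
      rw [← union_sdiff_cancel_left (hdisj S hS), ← union_sdiff_cancel_left (hdisj T hT)]
      exact congrArg (· \ A) hST
    rw [Icc_eq_image_powerset hAB, sum_image hinj,
      sum_congr rfl fun S hS => by rw [card_union_of_disjoint (hdisj S hS), pow_add],
      ← mul_sum]
    have hpow := congrArg (Int.cast : ℤ → R) (sum_powerset_neg_one_pow_card (x := B \ A))
    push_cast at hpow
    rw [hpow]
    have hBA : B \ A = ∅ ↔ A = B :=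
      sdiff_eq_empty_iff_subset.trans ⟨hAB.antisymm, fun h => h ▸ subset_rfl⟩
    simp only [hBA, mul_ite, mul_one, mul_zero]
  · rw [Icc_eq_empty hAB, sum_empty, if_neg fun h => hAB h.le]

lemma sum_range_neg_one_pow_card_bitSet {n : ℕ} (A B : Finset ℕ) (hB : B ⊆ bitSet n) :
    ∑ k ∈ range (n + 1), (if A ⊆ bitSet k ∧ bitSet k ⊆ B then (-1 : R) ^ #(bitSet k) else 0) =
      if A = B then (-1) ^ #A else 0 := by
  rw [← sum_filter, ← sum_Icc_neg_one_pow_card]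
  refine sum_nbij' bitSet (fun K => ∑ i ∈ K, 2 ^ i) (fun k hk => ?_) (fun K hK => ?_)
    (fun k _ => sum_two_pow_bitSet k) (fun K _ => bitSet_sum_two_pow K) (fun _ _ => rfl)
  · simpa using (mem_filter.mp hk).2
  · rw [mem_Icc] at hK
    rw [mem_filter, mem_range, Nat.lt_succ_iff, bitSet_sum_two_pow]
    exact ⟨le_of_bitSet_subset (by rw [bitSet_sum_two_pow]; exact hK.2.trans hB), hK⟩

lemma sum_range_ite_window {j p q : ℕ} (C : Finset ℕ) :
    ∑ k ∈ range (j + 1),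
      (if Disjoint (bitSet k) C ∧ bitSet k ⊆ bitSet j ∧ (p ≤ j ∧ bitSet (j - p) ⊆ bitSet k) ∧
          (q ≤ j ∧ bitSet (j - q) ⊆ bitSet k) then (-1 : R) ^ #(bitSet k) else 0) =
      if bitSet p ∪ bitSet q ⊆ bitSet j ∧ bitSet j ∩ C = bitSet p ∩ bitSet q then
        (-1) ^ #(bitSet j \ (bitSet p ∩ bitSet q)) else 0 := by
  by_cases hPQ : bitSet p ∪ bitSet q ⊆ bitSet j
  · have hcond : ∀ k, (Disjoint (bitSet k) C ∧ bitSet k ⊆ bitSet j ∧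
        (p ≤ j ∧ bitSet (j - p) ⊆ bitSet k) ∧ (q ≤ j ∧ bitSet (j - q) ⊆ bitSet k)) ↔
        bitSet j \ (bitSet p ∩ bitSet q) ⊆ bitSet k ∧ bitSet k ⊆ bitSet j \ C := by
      intro k
      rw [subset_sdiff, sdiff_inter_distrib_right, union_subset_iff]
      constructor
      · rintro ⟨hC, hK, hp, hq⟩
        exact ⟨⟨((le_and_bitSet_sub_subset_iff hK).mp hp).2,
          ((le_and_bitSet_sub_subset_iff hK).mp hq).2⟩, hK, hC⟩
      · rintro ⟨⟨hp, hq⟩, hK, hC⟩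
        exact ⟨hC, hK, (le_and_bitSet_sub_subset_iff hK).mpr ⟨(union_subset_iff.mp hPQ).1, hp⟩,
          (le_and_bitSet_sub_subset_iff hK).mpr ⟨(union_subset_iff.mp hPQ).2, hq⟩⟩
    simp only [hcond]
    have hD : bitSet j ∩ (bitSet p ∩ bitSet q) = bitSet p ∩ bitSet q :=
      inter_eq_right.mpr (inter_subset_left.trans (subset_union_left.trans hPQ))
    rw [sum_range_neg_one_pow_card_bitSet _ _ sdiff_subset]
    refine if_congr ?_ rfl rfl
    rw [sdiff_eq_sdiff_iff_inter_eq_inter, hD]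
    exact ⟨fun h => ⟨hPQ, h.symm⟩, fun h => h.2.symm⟩
  · rw [if_neg (fun h => hPQ h.1)]
    refine sum_eq_zero fun k _ => if_neg ?_
    rintro ⟨-, hK, hp, hq⟩
    exact hPQ (union_subset ((le_and_bitSet_sub_subset_iff hK).mp hp).1
      ((le_and_bitSet_sub_subset_iff hK).mp hq).1)

/-- With `j = x + d` and `m - j = y + d` for bitwise disjoint `x, y, d`, the admissible `j` are
the `x + d` with `x` in an interval of submasks of `m - 2 * d`. -/
lemma sum_range_ite_splitting_eq_sum_range_ite_interval {w d m : ℕ} (hdw : bitSet d ⊆ bitSet w)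
    (hd : 2 * d ≤ m) (hE : Disjoint (bitSet (m - 2 * d)) (bitSet d)) :
    ∑ j ∈ range (m + 1), (if bitSet w ⊆ bitSet j ∧ bitSet j ∩ bitSet (m - j) = bitSet d then
        (-1 : R) ^ #(bitSet j \ bitSet d) else 0) =
      ∑ x ∈ range (m - 2 * d + 1), (if bitSet w \ bitSet d ⊆ bitSet x ∧
        bitSet x ⊆ bitSet (m - 2 * d) then (-1) ^ #(bitSet x) else 0) := by
  rw [← sum_filter, ← sum_filter]
  refine sum_nbij' (fun j => j - d) (fun x => x + d) (fun j hj => ?_) (fun x hx => ?_)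
    (fun j hj => ?_) (fun x _ => Nat.add_sub_cancel x d) (fun j hj => ?_)
  · obtain ⟨hjm, hW, h⟩ := by simpa only [mem_filter, mem_range] using hj
    have hdj : bitSet d ⊆ bitSet j := h ▸ inter_subset_left
    have hxE : bitSet (j - d) ⊆ bitSet (m - 2 * d) :=
      (bitSet_sub_two_mul_of_inter_eq (by omega) h).2 ▸ subset_union_left
    rw [mem_filter, mem_range]
    refine ⟨Nat.lt_succ_of_le (le_of_bitSet_subset hxE), ?_, hxE⟩
    rw [bitSet_sub hdj]
    exact sdiff_subset_sdiff hW subset_rfl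
  · obtain ⟨-, hW, hxE⟩ := by simpa only [mem_filter, mem_range] using hx
    have := le_of_bitSet_subset hxE
    rw [mem_filter, mem_range]
    refine ⟨by omega, ?_, bitSet_add_inter_bitSet_sub_eq hd hE hxE⟩
    rw [bitSet_add (disjoint_of_subset_left hxE hE), ← sdiff_union_of_subset hdw]
    exact union_subset_union hW subset_rfl
  · exact Nat.sub_add_cancel (le_of_bitSet_subset ((mem_filter.mp hj).2.2 ▸ inter_subset_left))
  · rw [bitSet_sub ((mem_filter.mp hj).2.2 ▸ inter_subset_left)]

lemma sum_range_ite_splitting {w d m : ℕ} (hdw : bitSet d ⊆ bitSet w) :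
    ∑ j ∈ range (m + 1), (if bitSet w ⊆ bitSet j ∧ bitSet j ∩ bitSet (m - j) = bitSet d then
        (-1 : R) ^ #(bitSet j \ bitSet d) else 0) =
      if w + d = m then (-1) ^ #(bitSet w \ bitSet d) else 0 := by
  by_cases hS : ∃ j ≤ m, bitSet j ∩ bitSet (m - j) = bitSet d
  · obtain ⟨j₀, hj₀, h₀⟩ := hS
    obtain ⟨hd, hE⟩ := bitSet_sub_two_mul_of_inter_eq hj₀ h₀
    have hED : Disjoint (bitSet (m - 2 * d)) (bitSet d) := by
      rw [hE, bitSet_sub (h₀ ▸ inter_subset_left), bitSet_sub (h₀ ▸ inter_subset_right)]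
      exact disjoint_union_left.mpr ⟨sdiff_disjoint, sdiff_disjoint⟩
    rw [sum_range_ite_splitting_eq_sum_range_ite_interval hdw hd hED,
      sum_range_neg_one_pow_card_bitSet _ _ subset_rfl, ← bitSet_sub hdw]
    have := le_of_bitSet_subset hdw
    refine if_congr ?_ rfl rfl
    rw [bitSet_injective.eq_iff]
    omega
  · refine (sum_eq_zero fun j hj => if_neg fun h => hS ⟨j, ?_, h.2⟩).trans
      (if_neg fun hm => ?_).symm
    · exact Nat.lt_succ_iff.mp (mem_range.mp hj)
    · refine hS ⟨w, by omega, ?_⟩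
      rw [show m - w = d by omega]
      exact inter_eq_right.mpr hdw

lemma neg_one_pow_card_symmDiff_mul {α : Type*} [DecidableEq α] (P Q : Finset α) :
    (-1 : R) ^ #((P ∪ Q) \ (P ∩ Q)) * ((-1) ^ #P * (-1) ^ #Q) = 1 := by
  have hsub : P ∩ Q ⊆ P ∪ Q := inter_subset_left.trans subset_union_left
  have h₁ := card_sdiff_of_subset hsub
  have h₂ := card_union_add_card_inter P Q
  have h₃ := card_le_card hsub
  rw [← pow_add, ← pow_add, show #((P ∪ Q) \ (P ∩ Q)) + (#P + #Q) =
    2 * (#((P ∪ Q) \ (P ∩ Q)) + #(P ∩ Q)) by omega, pow_mul, neg_one_sq, one_pow]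

def sierpinskiWindow (R : Type*) [Ring R] (k j t : ℕ) : R :=
  if t ∈ Icc (j - k) j then sierpinski R k (j - t) * thueMorseSign R t else 0

lemma sierpinskiWindow_eq (k j t : ℕ) :
    sierpinskiWindow R k j t =
      if t ≤ j ∧ bitSet (j - t) ⊆ bitSet k then (-1) ^ #(bitSet t) else 0 := by
  rw [sierpinskiWindow, thueMorseSign_eq]
  by_cases ht : t ∈ Icc (j - k) j
  · rw [mem_Icc] at ht
    rw [if_pos (mem_Icc.mpr ht), sierpinski_eq_ite_subset (by omega)]
    by_cases h : bitSet (j - t) ⊆ bitSet k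
    · rw [if_pos h, if_pos ⟨ht.2, h⟩, one_mul]
    · rw [if_neg h, if_neg fun h' => h h'.2, zero_mul]
  · rw [if_neg ht, if_neg]
    rintro ⟨htj, h⟩
    have := le_of_bitSet_subset h
    exact ht (mem_Icc.mpr ⟨by omega, htj⟩)

def sierpinskiKernel (R : Type*) [Ring R] (m p q : ℕ) : R :=
  ∑ k ∈ range (m + 1), ∑ j ∈ Icc k m, thueMorseSign R k * sierpinski R (k + m - j) k *
    sierpinski R j k * sierpinskiWindow R k j p * sierpinskiWindow R k j q

lemma sum_Icc_sierpinski_mul_eq {k j m : ℕ} (hj : j ≤ m) (f : ℕ → R) :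
    ∑ t ∈ Icc (j - k) j, sierpinski R k (j - t) * thueMorseSign R t * f t =
      ∑ t ∈ range (m + 1), sierpinskiWindow R k j t * f t := by
  simp only [sierpinskiWindow, ite_mul, zero_mul]
  rw [sum_ite_mem, inter_eq_right.mpr fun t ht => mem_range.mpr (by
    have := (mem_Icc.mp ht).2; omega)]

end Ring

lemma sum_mul_sum_mul_sum_mul_sum {S : Type*} [CommSemiring S] {ι κ τ : Type*} (s : Finset ι)
    (t : ι → Finset κ) (u : Finset τ) (c : ι → S) (g h : ι → κ → S) (f : ι → κ → τ → S)
    (a b : τ → S) :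
    ∑ i ∈ s, c i * ∑ j ∈ t i, g i j * h i j * (∑ p ∈ u, f i j p * a p) *
        (∑ q ∈ u, f i j q * b q) =
      ∑ p ∈ u, ∑ q ∈ u, (∑ i ∈ s, ∑ j ∈ t i, c i * g i j * h i j * f i j p * f i j q) *
        (a p * b q) := by
  calc _ = ∑ i ∈ s, ∑ j ∈ t i, ∑ p ∈ u, ∑ q ∈ u,
        c i * g i j * h i j * f i j p * f i j q * (a p * b q) := by
        refine sum_congr rfl fun i _ => ?_
        rw [mul_sum]
        refine sum_congr rfl fun j _ => ?_
        rw [mul_assoc (g i j * h i j), sum_mul_sum, mul_sum, mul_sum]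
        refine sum_congr rfl fun p _ => ?_
        rw [mul_sum, mul_sum]
        exact sum_congr rfl fun q _ => by ring
    _ = ∑ i ∈ s, ∑ p ∈ u, ∑ q ∈ u, ∑ j ∈ t i,
        c i * g i j * h i j * f i j p * f i j q * (a p * b q) :=
      sum_congr rfl fun i _ => sum_comm.trans (sum_congr rfl fun p _ => sum_comm)
    _ = _ := by
      simp only [sum_mul]
      exact sum_comm.trans (sum_congr rfl fun p _ => sum_comm)

lemma coeff_mul_eq_sum_range_sum_range {R : Type*} [Semiring R] (a b : PowerSeries R) (m : ℕ) :
    PowerSeries.coeff m (a * b) = ∑ p ∈ range (m + 1), ∑ q ∈ range (m + 1),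
      (if p + q = m then 1 else 0) * (PowerSeries.coeff p a * PowerSeries.coeff q b) := by
  rw [PowerSeries.coeff_mul, Nat.sum_antidiagonal_eq_sum_range_succ_mk]
  refine sum_congr rfl fun p hp => ?_
  rw [sum_eq_single_of_mem (m - p) (mem_range.mpr (by omega)) fun q _ hq => by
    rw [if_neg (by omega), zero_mul], if_pos (by have := mem_range.mp hp; omega), one_mul]

section CommRing

variable {R : Type*} [CommRing R]

lemma sierpinskiKernel_term_eq {k j m : ℕ} (hkj : k ≤ j) (p q : ℕ) :
    thueMorseSign R k * sierpinski R (k + m - j) k * sierpinski R j k *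
        sierpinskiWindow R k j p * sierpinskiWindow R k j q =
      (if Disjoint (bitSet k) (bitSet (m - j)) ∧ bitSet k ⊆ bitSet j ∧
          (p ≤ j ∧ bitSet (j - p) ⊆ bitSet k) ∧ (q ≤ j ∧ bitSet (j - q) ⊆ bitSet k) then
        (-1 : R) ^ #(bitSet k) else 0) * ((-1) ^ #(bitSet p) * (-1) ^ #(bitSet q)) := by
  rw [thueMorseSign_eq, sierpinski_eq_ite_disjoint, show k + m - j - k = m - j by omega,
    sierpinski_eq_ite_subset hkj, sierpinskiWindow_eq, sierpinskiWindow_eq]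
  by_cases h : Disjoint (bitSet k) (bitSet (m - j)) ∧ bitSet k ⊆ bitSet j ∧
      (p ≤ j ∧ bitSet (j - p) ⊆ bitSet k) ∧ (q ≤ j ∧ bitSet (j - q) ⊆ bitSet k)
  · rw [if_pos h]
    obtain ⟨hC, hJ, hp, hq⟩ := h
    rw [if_pos hC, if_pos hJ, if_pos hp, if_pos hq]
    ring
  · rw [if_neg h, zero_mul]
    rw [not_and_or, not_and_or, not_and_or] at h
    rcases h with h | h | h | h <;> simp only [if_neg h, mul_zero, zero_mul]

lemma sierpinskiKernel_eq (m p q : ℕ) :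
    sierpinskiKernel R m p q = if p + q = m then 1 else 0 := by
  rw [sierpinskiKernel, sum_comm' (t' := range (m + 1)) (s' := fun j => range (j + 1))
    fun k j => by simp only [mem_range, mem_Icc]; omega]
  rw [sum_congr rfl fun j _ => (sum_congr rfl fun k hk =>
      sierpinskiKernel_term_eq (Nat.lt_succ_iff.mp (mem_range.mp hk)) p q).trans
    (by rw [← sum_mul, sum_range_ite_window])]
  rw [← sum_mul]
  simp only [← bitSet_lor p q, ← bitSet_land p q]
  rw [sum_range_ite_splitting (by simp [inter_subset_left.trans subset_union_left]),
    ← add_eq_lor_add_land]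
  split_ifs
  · rw [bitSet_lor, bitSet_land, neg_one_pow_card_symmDiff_mul]
  · rw [zero_mul]

lemma sum_range_sum_range_sierpinskiKernel_mul (a b : ℕ → R) (m : ℕ) :
    ∑ p ∈ range (m + 1), ∑ q ∈ range (m + 1), sierpinskiKernel R m p q * (a p * b q) =
      ∑ k ∈ range (m + 1), thueMorseSign R k * ∑ j ∈ Icc k m,
        sierpinski R (k + m - j) k * sierpinski R j k *
          (∑ t ∈ Icc (j - k) j, sierpinski R k (j - t) * thueMorseSign R t * a t) *
          (∑ t ∈ Icc (j - k) j, sierpinski R k (j - t) * thueMorseSign R t * b t) := by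
  refine (sum_mul_sum_mul_sum_mul_sum (range (m + 1)) (fun k => Icc k m) (range (m + 1))
    (thueMorseSign R) (fun k j => sierpinski R (k + m - j) k) (fun k j => sierpinski R j k)
    (sierpinskiWindow R) a b).symm.trans (sum_congr rfl fun k _ => congrArg _ ?_)
  refine sum_congr rfl fun j hj => ?_
  rw [sum_Icc_sierpinski_mul_eq (mem_Icc.mp hj).2, sum_Icc_sierpinski_mul_eq (mem_Icc.mp hj).2]

end CommRing

end SierpinskiConvolution

theorem sierpinski_convolution {R : Type*} [CommRing R]
    (a b : PowerSeries R) (m : ℕ) :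
    PowerSeries.coeff m (a * b) =
      ∑ k ∈ Finset.range (m + 1),
        (-1 : R) ^ ((Nat.digits 2 k).sum) *
          ∑ j ∈ Finset.Icc k m,
            (if k &&& ((k + m - j) - k) = 0 then (1 : R) else 0) *
            (if k &&& (j - k) = 0 then (1 : R) else 0) *
            (∑ t ∈ Finset.Icc (j - k) j,
              (if (j - t) &&& (k - (j - t)) = 0 then (1 : R) else 0) *
                (-1 : R) ^ ((Nat.digits 2 t).sum) * PowerSeries.coeff t a) *
            (∑ t ∈ Finset.Icc (j - k) j,
              (if (j - t) &&& (k - (j - t)) = 0 then (1 : R) else 0) *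
                (-1 : R) ^ ((Nat.digits 2 t).sum) * PowerSeries.coeff t b) := by
  rw [SierpinskiConvolution.coeff_mul_eq_sum_range_sum_range]
  simp only [← SierpinskiConvolution.sierpinskiKernel_eq]
  exact SierpinskiConvolution.sum_range_sum_range_sierpinskiKernel_mul
    (PowerSeries.coeff · a) (PowerSeries.coeff · b) m
end

section
/- Let n = 2^d ≥ 2 and A, B polynomials of degree < n over a commutative ring. Then A·B = ((1−x^n)/(1−x))·(A ⊙ B) − ∑_{m=1}^{n−1} ((1−x^{2^{⌊log₂ m⌋}})/((1−x)·x^m)) · ( ((1−x^n)/(1−x^{2^{⌊log₂ m⌋+1}}))·x^m ⊙ (1−x^{2^{⌊log₂ m⌋}})·A ) · ( ((1−x^n)/(1−x^{2^{⌊log₂ m⌋+1}}))·x^m ⊙ (1−x^{2^{⌊log₂ m⌋}})·B ). -/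
/-!
Let `A⁽ᵉ⁾ᵣ(Y) = ∑ᵢ a_{ie+r} Yⁱ` be the stride-`e` polyphase components of `A` and
`Qₑ = ∑_{r<e} Xʳ (A⁽ᵉ⁾ᵣ B⁽ᵉ⁾ᵣ)(Xᵉ)`, so that `Q₁ = A B` and `Qₙ = A ⊙ B`. Since
`A⁽ᵉ⁾ᵣ(Y) = A⁽²ᵉ⁾ᵣ(Y²) + Y A⁽²ᵉ⁾ₑ₊ᵣ(Y²)`, one Karatsuba step on every residue class gives
`Qₑ = (1 + Xᵉ) Q₂ₑ - Dₑ`, where `Dₑ` collects the products of the differences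
`A⁽²ᵉ⁾ₑ₊ᵣ - A⁽²ᵉ⁾ᵣ` and `B⁽²ᵉ⁾ₑ₊ᵣ - B⁽²ᵉ⁾ᵣ`. Unrolling from `e = 1` to `e = n` produces the
factors `∏_{j<L} (1 + x^{2^j}) = (1 - x^{2^L})/(1 - x)`. For `2^L ≤ m < 2^{L+1}` the `m`-th
summand of the formula is the residue-`(m - 2^L)` part of `D_{2^L}`: its mask picks the
coefficients of `(1 - x^{2^L}) A` at the exponents `≡ m (mod 2^{L+1})`, and these are
`a_{m+i2^{L+1}} - a_{m-2^L+i2^{L+1}}`.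
-/

open Polynomial Finset

theorem Finset.sum_Icc_one_two_pow_sub_one {M : Type*} [AddCommMonoid M] (f : ℕ → M) (d : ℕ) :
    ∑ m ∈ Icc 1 (2 ^ d - 1), f m = ∑ L ∈ range d, ∑ s ∈ range (2 ^ L), f (2 ^ L + s) := by
  rw [Icc_sub_one_right_eq_Ico_of_not_isMin (by simp)]
  induction d with
  | zero => simp
  | succ d ih =>
    rw [sum_range_succ, ← ih, ← sum_Ico_consecutive f Nat.one_le_two_pow
      (Nat.pow_le_pow_right two_pos d.le_succ), sum_Ico_eq_sum_range f (2 ^ d), pow_succ, mul_two,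
      Nat.add_sub_cancel_left]

theorem geom_sum_two_mul {R : Type*} [CommSemiring R] (x : R) (n : ℕ) :
    ∑ i ∈ range (2 * n), x ^ i = (∑ i ∈ range n, x ^ i) * (1 + x ^ n) := by
  simp only [two_mul, sum_range_add, pow_add, ← mul_sum]
  ring

namespace Polynomial

section Semiring

variable {R : Type*} [Semiring R]

/-- The polyphase component `∑ᵢ a_{ie+r} Xⁱ` of `A`; junk for `e = 0`. -/
noncomputable def polyphase (e r : ℕ) (A : R[X]) : R[X] :=
  ∑ i ∈ range (A.natDegree + 1), monomial i (A.coeff (i * e + r))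

theorem coeff_polyphase {e : ℕ} (he : 0 < e) (r : ℕ) (A : R[X]) (i : ℕ) :
    (polyphase e r A).coeff i = A.coeff (i * e + r) := by
  simp only [polyphase, finsetSum_coeff, coeff_monomial, sum_ite_eq', mem_range]
  split_ifs with hi
  · rfl
  · exact (coeff_eq_zero_of_natDegree_lt (by nlinarith)).symm

theorem polyphase_one_zero (A : R[X]) : polyphase 1 0 A = A := by
  ext i; rw [coeff_polyphase one_pos, mul_one, add_zero]

theorem polyphase_of_natDegree_lt {e : ℕ} {A : R[X]} (hA : A.natDegree < e) (r : ℕ) :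
    polyphase e r A = C (A.coeff r) := by
  ext i
  rw [coeff_polyphase (by omega), coeff_C]
  rcases i with _ | i
  · simp
  · exact coeff_eq_zero_of_natDegree_lt (by nlinarith)

theorem polyphase_X_pow_mul {e h r : ℕ} (he : 0 < e) (hr : h ≤ r) (A : R[X]) :
    polyphase e r (X ^ h * A) = polyphase e (r - h) A := by
  ext i
  rw [coeff_polyphase he, coeff_polyphase he, coeff_X_pow_mul', if_pos (by omega)]
  congr 1; omega

end Semiring

section Ring

variable {R : Type*} [Ring R]

theorem polyphase_sub {e : ℕ} (he : 0 < e) (r : ℕ) (A B : R[X]) :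
    polyphase e r (A - B) = polyphase e r A - polyphase e r B := by
  ext i; simp only [coeff_sub, coeff_polyphase he]

theorem natDegree_one_sub_X_pow_mul_lt {h n : ℕ} {P : R[X]} (hP : P.natDegree < n) :
    ((1 - X ^ h) * P).natDegree < h + n :=
  natDegree_mul_le.trans_lt (Nat.add_lt_add_of_le_of_lt
    ((natDegree_sub_le _ _).trans (by simp [natDegree_X_pow_le])) hP)

theorem polyphase_one_sub_X_pow_mul {e h r : ℕ} (he : 0 < e) (hr : h ≤ r) (P : R[X]) :
    polyphase e r ((1 - X ^ h) * P) = polyphase e r P - polyphase e (r - h) P := by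
  rw [sub_mul, one_mul, polyphase_sub he, polyphase_X_pow_mul he hr]

end Ring

section CommSemiring

variable {R : Type*} [CommSemiring R]

theorem polyphase_eq_expand_add {e : ℕ} (he : 0 < e) (r : ℕ) (A : R[X]) :
    polyphase e r A = expand R 2 (polyphase (2 * e) r A)
      + X * expand R 2 (polyphase (2 * e) (e + r) A) := by
  have h2e : 0 < 2 * e := by omega
  ext i
  rw [coeff_add, ← pow_one (X : R[X]), coeff_X_pow_mul', coeff_expand two_pos,
    coeff_expand two_pos, coeff_polyphase he]
  obtain ⟨j, rfl | rfl⟩ := Nat.even_or_odd' i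
  · rw [if_pos (dvd_mul_right 2 j), coeff_polyphase h2e, Nat.mul_div_cancel_left j two_pos]
    rcases j with _ | j
    · simp
    · rw [if_pos (by omega), if_neg (by omega), add_zero]; congr 1; ring
  · rw [if_neg (by omega), if_pos (by omega), if_pos (by omega), coeff_polyphase h2e, zero_add,
      show (2 * j + 1 - 1) / 2 = j by omega]
    congr 1; ring

end CommSemiring

section CommRing

variable {R : Type*} [CommRing R]

theorem coeff_hadamard (P Q : R[X]) (k : ℕ) :
    (hadamard P Q).coeff k = P.coeff k * Q.coeff k := by
  simp only [hadamard, finsetSum_coeff, coeff_C_mul_X_pow, sum_ite_eq, mem_support_iff]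
  split_ifs with hk
  · rfl
  · rw [notMem_support_iff.1 hk, zero_mul]

noncomputable def polyphaseDiag (e : ℕ) (A B : R[X]) : R[X] :=
  ∑ r ∈ range e, X ^ r * expand R e (polyphase e r A * polyphase e r B)

theorem polyphaseDiag_one (A B : R[X]) : polyphaseDiag 1 A B = A * B := by
  simp [polyphaseDiag, polyphase_one_zero]

theorem polyphaseDiag_of_natDegree_lt {e : ℕ} {A B : R[X]} (hA : A.natDegree < e)
    (hB : B.natDegree < e) : polyphaseDiag e A B = hadamard A B := by
  ext k
  simp only [polyphaseDiag, polyphase_of_natDegree_lt hA, polyphase_of_natDegree_lt hB,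
    ← C_mul, expand_C, X_pow_mul, finsetSum_coeff, coeff_C_mul_X_pow, sum_ite_eq, mem_range,
    coeff_hadamard]
  split_ifs with hk
  · rfl
  · rw [coeff_eq_zero_of_natDegree_lt (by omega), zero_mul]

noncomputable def karatsubaCorrection (e : ℕ) (A B : R[X]) : R[X] :=
  ∑ r ∈ range e, X ^ (e + r) * expand R (2 * e)
    ((polyphase (2 * e) (e + r) A - polyphase (2 * e) r A) *
      (polyphase (2 * e) (e + r) B - polyphase (2 * e) r B))

/-- One Karatsuba step, `(a + y a')(b + y b') = (1 + y)(a b + y a' b') - y (a' - a)(b' - b)`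
with `y = X ^ e`, applied to every residue class. -/
theorem polyphaseDiag_eq_sub_karatsubaCorrection {e : ℕ} (he : 0 < e) (A B : R[X]) :
    polyphaseDiag e A B
      = (1 + X ^ e) * polyphaseDiag (2 * e) A B - karatsubaCorrection e A B := by
  have hsplit : polyphaseDiag (2 * e) A B = ∑ r ∈ range e,
      (X ^ r * expand R (2 * e) (polyphase (2 * e) r A * polyphase (2 * e) r B)
        + X ^ (e + r) * expand R (2 * e)
            (polyphase (2 * e) (e + r) A * polyphase (2 * e) (e + r) B)) := by
    rw [polyphaseDiag, sum_add_distrib, ← sum_range_add (fun r => X ^ r * expand R (2 * e)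
      (polyphase (2 * e) r A * polyphase (2 * e) r B)), two_mul]
  rw [polyphaseDiag, hsplit, karatsubaCorrection, mul_sum, ← sum_sub_distrib]
  refine sum_congr rfl fun r _ => ?_
  rw [polyphase_eq_expand_add he r A, polyphase_eq_expand_add he r B]
  simp only [map_add, map_mul, map_sub, expand_X, expand_expand, mul_comm e 2, pow_add]
  ring

theorem mul_eq_geom_sum_mul_polyphaseDiag_sub (A B : R[X]) (L : ℕ) :
    A * B = (∑ i ∈ range (2 ^ L), X ^ i) * polyphaseDiag (2 ^ L) A B
      - ∑ j ∈ range L, (∑ i ∈ range (2 ^ j), X ^ i) * karatsubaCorrection (2 ^ j) A B := by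
  induction L with
  | zero => simp [polyphaseDiag_one]
  | succ L ih =>
    rw [ih, polyphaseDiag_eq_sub_karatsubaCorrection (by positivity), sum_range_succ, pow_succ',
      geom_sum_two_mul]
    ring

theorem hadamard_geom_sum_mul_X_pow {e : ℕ} (he : 0 < e) (N m : ℕ) {P : R[X]}
    (hP : P.natDegree < e * N + m) :
    hadamard ((∑ i ∈ range N, X ^ (e * i)) * X ^ m) P = X ^ m * expand R e (polyphase e m P) := by
  ext k
  rw [coeff_hadamard, coeff_mul_X_pow', coeff_X_pow_mul']
  split_ifs with hmk
  · obtain ⟨t, rfl⟩ := Nat.exists_eq_add_of_le hmk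
    simp only [Nat.add_sub_cancel_left, coeff_expand he, finsetSum_coeff, coeff_X_pow]
    split_ifs with het
    · obtain ⟨q, rfl⟩ := het
      simp only [coeff_polyphase he, Nat.mul_div_cancel_left q he, Nat.mul_left_cancel_iff he,
        sum_ite_eq, mem_range, ite_mul, one_mul, zero_mul, add_comm m, mul_comm q]
      split_ifs with hq
      · rfl
      · exact (coeff_eq_zero_of_natDegree_lt (by nlinarith)).symm
    · rw [sum_eq_zero fun i _ => if_neg fun h => het ⟨i, h⟩, zero_mul]
  · rw [zero_mul]

/-- The `m`-th summand of the partially flattened Karatsuba formula for `n = 2 ^ d`. -/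
noncomputable def flattenedTerm (d m : ℕ) (A B : R[X]) : R[X] :=
  ((∑ i ∈ Finset.range (2 ^ (Nat.log 2 m)), (X : R[X]) ^ i) *
    hadamard
      ((∑ i ∈ Finset.range (2 ^ (d - Nat.log 2 m - 1)),
          (X : R[X]) ^ (2 ^ (Nat.log 2 m + 1) * i)) * X ^ m)
      ((1 - (X : R[X]) ^ (2 ^ (Nat.log 2 m))) * A) *
    hadamard
      ((∑ i ∈ Finset.range (2 ^ (d - Nat.log 2 m - 1)),
          (X : R[X]) ^ (2 ^ (Nat.log 2 m + 1) * i)) * X ^ m)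
      ((1 - (X : R[X]) ^ (2 ^ (Nat.log 2 m))) * B)) /ₘ (X ^ m)

theorem flattenedTerm_two_pow_add {d L s : ℕ} (hL : L < d) (hs : s < 2 ^ L) {A B : R[X]}
    (hA : A.natDegree < 2 ^ d) (hB : B.natDegree < 2 ^ d) :
    flattenedTerm d (2 ^ L + s) A B = (∑ i ∈ range (2 ^ L), X ^ i) *
      (X ^ (2 ^ L + s) * expand R (2 * 2 ^ L)
        ((polyphase (2 * 2 ^ L) (2 ^ L + s) A - polyphase (2 * 2 ^ L) s A) *
          (polyphase (2 * 2 ^ L) (2 ^ L + s) B - polyphase (2 * 2 ^ L) s B))) := by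
  have hlog : Nat.log 2 (2 ^ L + s) = L :=
    Nat.log_eq_of_pow_le_of_lt_pow (by omega) (by rw [pow_succ]; omega)
  have hstride : 0 < 2 * 2 ^ L := by positivity
  have hmask (P : R[X]) (hP : P.natDegree < 2 ^ d) :
      hadamard ((∑ i ∈ range (2 ^ (d - L - 1)), X ^ (2 * 2 ^ L * i)) * X ^ (2 ^ L + s))
        ((1 - X ^ 2 ^ L) * P) = X ^ (2 ^ L + s) * expand R (2 * 2 ^ L)
          (polyphase (2 * 2 ^ L) (2 ^ L + s) P - polyphase (2 * 2 ^ L) s P) := by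
    have hsize : 2 * 2 ^ L * 2 ^ (d - L - 1) = 2 ^ d := by
      rw [← pow_succ', ← pow_add]; congr 1; omega
    rw [hadamard_geom_sum_mul_X_pow hstride _ _
        (natDegree_one_sub_X_pow_mul_lt hP |>.trans_le (by omega)),
      polyphase_one_sub_X_pow_mul hstride (by omega), Nat.add_sub_cancel_left]
  rw [flattenedTerm, hlog, pow_succ', hmask A hA, hmask B hB, map_mul, show ∀ S a b : R[X], S * (X ^ (2 ^ L + s) * a) * (X ^ (2 ^ L + s) * b)
      = X ^ (2 ^ L + s) * (S * (X ^ (2 ^ L + s) * (a * b))) by intros; ring,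
    mul_divByMonic_cancel_left _ (monic_X_pow _)]

theorem sum_flattenedTerm {d : ℕ} {A B : R[X]} (hA : A.natDegree < 2 ^ d)
    (hB : B.natDegree < 2 ^ d) :
    ∑ m ∈ Icc 1 (2 ^ d - 1), flattenedTerm d m A B
      = ∑ L ∈ range d, (∑ i ∈ range (2 ^ L), X ^ i) * karatsubaCorrection (2 ^ L) A B := by
  rw [sum_Icc_one_two_pow_sub_one]
  refine sum_congr rfl fun L hL => ?_
  rw [karatsubaCorrection, mul_sum]
  exact sum_congr rfl fun s hs =>
    flattenedTerm_two_pow_add (mem_range.1 hL) (mem_range.1 hs) hA hB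

end CommRing

end Polynomial

theorem partially_flattened_karatsuba_general {R : Type*} [CommRing R]
    (d : ℕ) (A B : R[X])
    (hA : A.natDegree < 2 ^ d) (hB : B.natDegree < 2 ^ d) :
    A * B =
      (∑ i ∈ Finset.range (2 ^ d), (X : R[X]) ^ i) * hadamard A B -
        ∑ m ∈ Finset.Icc 1 (2 ^ d - 1),
          ((∑ i ∈ Finset.range (2 ^ (Nat.log 2 m)), (X : R[X]) ^ i) *
            hadamard
              ((∑ i ∈ Finset.range (2 ^ (d - Nat.log 2 m - 1)),
                  (X : R[X]) ^ (2 ^ (Nat.log 2 m + 1) * i)) * X ^ m)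
              ((1 - (X : R[X]) ^ (2 ^ (Nat.log 2 m))) * A) *
            hadamard
              ((∑ i ∈ Finset.range (2 ^ (d - Nat.log 2 m - 1)),
                  (X : R[X]) ^ (2 ^ (Nat.log 2 m + 1) * i)) * X ^ m)
              ((1 - (X : R[X]) ^ (2 ^ (Nat.log 2 m))) * B)) /ₘ (X ^ m) := by
  rw [mul_eq_geom_sum_mul_polyphaseDiag_sub A B d, polyphaseDiag_of_natDegree_lt hA hB,
    ← sum_flattenedTerm hA hB]
  rfl

/-- Partially flattened Karatsuba formula.  Here `∑_{i<2^j} X^i` stands for the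
polynomial `(1-x^{2^j})/(1-x)`, `(∑_{i<2^(d-L-1)} X^(2^(L+1)·i))·X^m` stands for
`x^m (1-x^n)/(1-x^{2^(L+1)})` (with `L = ⌊log₂ m⌋`), and exact division by `x^m`
is expressed via division by the monic polynomial `X^m`. -/
theorem partially_flattened_karatsuba {R : Type*} [CommRing R]
    (d : ℕ) (hd : 1 ≤ d) (A B : R[X])
    (hA : A.natDegree < 2 ^ d) (hB : B.natDegree < 2 ^ d) :
    A * B =
      (∑ i ∈ Finset.range (2 ^ d), (X : R[X]) ^ i) * hadamard A B -
        ∑ m ∈ Finset.Icc 1 (2 ^ d - 1),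
          ((∑ i ∈ Finset.range (2 ^ (Nat.log 2 m)), (X : R[X]) ^ i) *
            hadamard
              ((∑ i ∈ Finset.range (2 ^ (d - Nat.log 2 m - 1)),
                  (X : R[X]) ^ (2 ^ (Nat.log 2 m + 1) * i)) * X ^ m)
              ((1 - (X : R[X]) ^ (2 ^ (Nat.log 2 m))) * A) *
            hadamard
              ((∑ i ∈ Finset.range (2 ^ (d - Nat.log 2 m - 1)),
                  (X : R[X]) ^ (2 ^ (Nat.log 2 m + 1) * i)) * X ^ m)
              ((1 - (X : R[X]) ^ (2 ^ (Nat.log 2 m))) * B)) /ₘ (X ^ m) :=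
  partially_flattened_karatsuba_general d A B hA hB
end

section
/- The number of monomials with nonzero coefficient in the polynomial ∏_{j : bit j of k is 1} (1 − x^{2^j}) is exactly 2^{s(k)}, where s(k) is the binary weight of k; consequently, for n = 2^d, the total count ∑_{k=0}^{n−1} 2^{s(k)} of elementary multiplications in the fully flattened formula equals 3^d = n^{log₂ 3}. -/
/-!
Let `S` be the set of positions of the binary digits `1` of `k`, so `#S = s(k)`. Multiplying a
polynomial of degree `< 2 ^ j` by `1 - X ^ 2 ^ j` produces two disjoint copies of its support, one
shifted by `2 ^ j`. Since `∑ i ∈ S, 2 ^ i < 2 ^ a` whenever every `i ∈ S` is below `a`, adding the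
factors in increasing order of `j` doubles the support each time.
For the count, `k ↦ S` is a bijection from `[0, 2 ^ d)` onto the subsets of `[0, d)`, so the sum is
`∑ S ⊆ [0, d), 2 ^ #S = (2 + 1) ^ d` by the binomial theorem.
-/

open Polynomial Finset

namespace Polynomial
variable {R : Type*}

theorem support_mul_X_pow [Semiring R] (p : R[X]) (n : ℕ) :
    (p * X ^ n).support = p.support.map (addRightEmbedding n) := by
  ext i
  simp only [mem_support_iff, coeff_mul_X_pow', mem_map, addRightEmbedding_apply]
  split_ifs with h
  · exact ⟨fun hi => ⟨i - n, hi, by omega⟩, by rintro ⟨j, hj, rfl⟩; simpa using hj⟩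
  · simp only [ne_eq, not_true_eq_false, false_iff, not_exists, not_and]
    omega

theorem support_add_of_disjoint [Semiring R] {p q : R[X]} (h : Disjoint p.support q.support) :
    (p + q).support = p.support ∪ q.support := by
  simpa [support, toFinsupp_add] using Finsupp.support_add_eq h

theorem card_support_mul_one_sub_X_pow [Ring R] {p : R[X]} {n : ℕ} (hn : p.natDegree < n) :
    #(p * (1 - X ^ n)).support = 2 * #p.support := by
  have hdisj : Disjoint p.support (-(p * X ^ n)).support := by
    rw [support_neg, support_mul_X_pow, disjoint_left]
    rintro _ hi hi'
    obtain ⟨j, -, rfl⟩ := mem_map.1 hi'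
    have := le_natDegree_of_mem_supp _ hi
    simp only [addRightEmbedding_apply] at this
    omega
  rw [mul_one_sub, sub_eq_add_neg, support_add_of_disjoint hdisj, card_union_of_disjoint hdisj,
    support_neg, support_mul_X_pow, card_map, two_mul]

theorem natDegree_one_sub_X_pow_le [Ring R] (n : ℕ) : (1 - X ^ n : R[X]).natDegree ≤ n := by
  compute_degree!

theorem card_support_prod_one_sub_X_pow_two_pow [CommRing R] [Nontrivial R] (s : Finset ℕ) :
    #(∏ j ∈ s, (1 - X ^ 2 ^ j : R[X])).support = 2 ^ #s := by
  induction s using Finset.induction_on_max with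
  | empty => rw [prod_empty, ← C_1, support_C one_ne_zero, card_singleton, card_empty, pow_zero]
  | insert a s ha ih =>
    have hdeg : (∏ j ∈ s, (1 - X ^ 2 ^ j : R[X])).natDegree < 2 ^ a :=
      calc _ ≤ ∑ j ∈ s, (1 - X ^ 2 ^ j : R[X]).natDegree := natDegree_prod_le _ _
        _ ≤ ∑ j ∈ s, 2 ^ j := sum_le_sum fun j _ => natDegree_one_sub_X_pow_le _
        _ < 2 ^ a := Nat.geomSum_lt le_rfl ha
    have has : a ∉ s := fun h => (ha a h).false
    rw [prod_insert has, mul_comm, card_support_mul_one_sub_X_pow hdeg, ih,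
      card_insert_of_notMem has, pow_succ']

end Polynomial

namespace Nat

theorem sum_digits_two_eq_length_bitIndices (n : ℕ) :
    (digits 2 n).sum = n.bitIndices.length := by
  induction n using Nat.binaryRec with
  | zero => simp
  | bit b n ih =>
    rcases eq_or_ne n 0 with rfl | hn
    · cases b <;> simp
    rw [digits_def' one_lt_two (pos_of_ne_zero (bit_ne_zero b hn)), List.sum_cons,
      bit_mod_two, bit_div_two, ih]
    cases b
    · rw [bitIndices_bit_false, List.length_map, Bool.toNat_false, zero_add]
    · rw [bitIndices_bit_true, List.length_cons, List.length_map, Bool.toNat_true, add_comm]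

theorem filter_testBit_range_eq_toFinset_bitIndices (n : ℕ) :
    (range (n + 1)).filter (n.testBit ·) = n.bitIndices.toFinset := by
  ext i
  simp only [mem_filter, mem_range, List.mem_toFinset, mem_bitIndices, and_iff_right_iff_imp]
  intro h
  have := two_pow_le_of_mem_bitIndices (mem_bitIndices.2 h)
  have := i.lt_two_pow_self
  omega

theorem sum_range_two_pow_comp_toFinset_bitIndices {M : Type*} [AddCommMonoid M] (d : ℕ)
    (f : Finset ℕ → M) :
    ∑ k ∈ range (2 ^ d), f k.bitIndices.toFinset = ∑ s ∈ (range d).powerset, f s := by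
  refine sum_nbij' (fun k => k.bitIndices.toFinset) (fun s => ∑ i ∈ s, 2 ^ i) ?_ ?_ ?_ ?_ ?_
  · intro k hk
    refine mem_powerset.2 fun i hi => ?_
    rw [mem_range, ← Nat.pow_lt_pow_iff_right one_lt_two]
    exact (two_pow_le_of_mem_bitIndices (List.mem_toFinset.1 hi)).trans_lt (mem_range.1 hk)
  · exact fun s hs =>
      mem_range.2 <| geomSum_lt le_rfl fun i hi => mem_range.1 (mem_powerset.1 hs hi)
  · exact fun k _ => sum_toFinset_bitIndices_two_pow k
  · exact fun s _ => toFinset_bitIndices_sum_two_pow s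
  · exact fun _ _ => rfl

end Nat

theorem elementary_multiplication_count :
    (∀ k : ℕ,
      ((∏ j ∈ (Finset.range (k + 1)).filter (fun j => k.testBit j),
          (1 - (X : ℤ[X]) ^ (2 ^ j))).support.card) =
        2 ^ ((Nat.digits 2 k).sum)) ∧
    ∀ d : ℕ, (∑ k ∈ Finset.range (2 ^ d), 2 ^ ((Nat.digits 2 k).sum)) = 3 ^ d := by
  have weight_eq_card (k : ℕ) : (Nat.digits 2 k).sum = #k.bitIndices.toFinset := by
    rw [Nat.sum_digits_two_eq_length_bitIndices, List.toFinset_card_of_nodup Nat.bitIndices_nodup]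
  refine ⟨fun k => ?_, fun d => ?_⟩
  · rw [Nat.filter_testBit_range_eq_toFinset_bitIndices,
      card_support_prod_one_sub_X_pow_two_pow, weight_eq_card]
  · calc ∑ k ∈ range (2 ^ d), 2 ^ (Nat.digits 2 k).sum
        = ∑ s ∈ (range d).powerset, 2 ^ #s := by
          simp only [weight_eq_card]
          exact Nat.sum_range_two_pow_comp_toFinset_bitIndices d (2 ^ #·)
      _ = 3 ^ d := by simpa using sum_pow_mul_eq_add_pow (2 : ℕ) 1 (range d)
end
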